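/- arXiv:1806.02004 — 8 statements merged into one kernel-verified Lean document; each statement's English description precedes it below -/
import Mathlib

section
/- If node a^σ_i is not bad (there is no j with both a^0_j and a^1_j reachable from a^σ_i), then there is a legal placement of all items whose nodes are reachable from a^σ_i: an assignment τ : reachable items → Bool with τ(i)=σ such that no two items with the same assigned table collide under the corresponding hash function, and the assignment respects the inference edges. -/
def InfAdj {U : Type*} {n m : ℕ} (x : Fin n → U) (h : Bool → U → Fin m)
    (v w : Bool × Fin n) : Prop :=
  w.1 = !v.1 ∧ v.2 ≠ w.2 ∧ h v.1 (x v.2) = h v.1 (x w.2)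

/-- Reachability by directed paths in the inference graph. -/
def Reach {U : Type*} {n m : ℕ} (x : Fin n → U) (h : Bool → U → Fin m) :
    Bool × Fin n → Bool × Fin n → Prop :=
  Relation.ReflTransGen (InfAdj x h)

/-- A node is bad if both copies of some item are reachable from it. -/
def BadNode {U : Type*} {n m : ℕ} (x : Fin n → U) (h : Bool → U → Fin m)
    (v : Bool × Fin n) : Prop :=
  ∃ j : Fin n, Reach x h v (false, j) ∧ Reach x h v (true, j)

/-- If `(σ, i)` is not bad, then all items reachable from `(σ, i)` can be legally
placed: there is an assignment `τ` with `τ i = σ`, respecting the inference edges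
(every reachable node `(γ, j)` gets `τ j = γ`), and with no same-table collisions
among the reachable items. -/
theorem stmt2 {U : Type*} {n m : ℕ} (x : Fin n → U) (h : Bool → U → Fin m)
    (σ : Bool) (i : Fin n) (hnb : ¬ BadNode x h (σ, i)) :
    ∃ τ : Fin n → Bool,
      τ i = σ ∧
      (∀ (γ : Bool) (j : Fin n), Reach x h (σ, i) (γ, j) → τ j = γ) ∧
      (∀ j k : Fin n, (∃ γ, Reach x h (σ, i) (γ, j)) → (∃ γ, Reach x h (σ, i) (γ, k)) →
        j ≠ k → τ j = τ k → h (τ j) (x j) ≠ h (τ k) (x k)) := by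
  classical
  have uniq : ∀ (j : Fin n) (γ γ' : Bool), Reach x h (σ, i) (γ, j) →
      Reach x h (σ, i) (γ', j) → γ = γ' := by
    intro j γ γ' h1 h2
    by_contra hne
    apply hnb
    refine ⟨j, ?_, ?_⟩ <;> rcases γ <;> rcases γ' <;> simp_all
  refine ⟨fun j => if hj : ∃ γ, Reach x h (σ, i) (γ, j) then hj.choose else true, ?_, ?_, ?_⟩
  · have hr : ∃ γ, Reach x h (σ, i) (γ, i) := ⟨σ, Relation.ReflTransGen.refl⟩
    simp only [dif_pos hr]
    exact uniq i _ σ hr.choose_spec Relation.ReflTransGen.refl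
  · intro γ j hj
    have hr : ∃ γ, Reach x h (σ, i) (γ, j) := ⟨γ, hj⟩
    simp only [dif_pos hr]
    exact uniq j _ γ hr.choose_spec hj
  · intro j k hj hk hjk heq hcol
    simp only [dif_pos hj, dif_pos hk] at heq hcol
    apply hnb
    have hadj : InfAdj x h (hj.choose, j) (!hj.choose, k) :=
      ⟨rfl, hjk, by simpa [heq] using hcol⟩
    have hreach : Reach x h (σ, i) (!hj.choose, k) :=
      hj.choose_spec.tail hadj
    have := uniq k _ (!hj.choose) hk.choose_spec hreach
    rw [heq] at this
    exact absurd this (by simp)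
end

section
/- If for every item i at least one of the nodes a^0_i, a^1_i is not bad, then there exists a legal placement of all n items, i.e., a function τ : Fin n → Bool such that for all distinct i,j with τ(i)=τ(j)=σ, h_σ(x_i) ≠ h_σ(x_j). -/
namespace Stmt3Aux

variable {U : Type*} {n m : ℕ} (x : Fin n → U) (h : Bool → U → Fin m)

/-- The "negation" of a node. -/
def neg {n : ℕ} (v : Bool × Fin n) : Bool × Fin n := (!v.1, v.2)

lemma infAdj_neg {v w : Bool × Fin n} (hvw : InfAdj x h v w) :
    InfAdj x h (neg w) (neg v) := by
  obtain ⟨h1, h2, h3⟩ := hvw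
  have hw : (!w.1) = v.1 := by rw [h1, Bool.not_not]
  refine ⟨by simp [neg, h1], by simpa [neg] using h2.symm, ?_⟩
  show h (!w.1) (x w.2) = h (!w.1) (x v.2)
  rw [hw]; exact h3.symm

lemma reach_neg {v w : Bool × Fin n} (hvw : Reach x h v w) :
    Reach x h (neg w) (neg v) := by
  induction hvw with
  | refl => exact Relation.ReflTransGen.refl
  | tail _ hedge ih => exact Relation.ReflTransGen.head (infAdj_neg x h hedge) ih

open Classical in
/-- The set of nodes reachable from `v`. -/
noncomputable def reachSet (v : Bool × Fin n) : Finset (Bool × Fin n) :=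
  Finset.univ.filter (Reach x h v)

lemma mem_reachSet {v w : Bool × Fin n} : w ∈ reachSet x h v ↔ Reach x h v w := by
  classical
  simp [reachSet]

/-- An injective encoding of nodes into `ℕ`. -/
def enc {n : ℕ} (p : Bool × Fin n) : ℕ := 2 * p.2.val + (if p.1 then 1 else 0)

lemma enc_inj : Function.Injective (enc (n := n)) := by
  rintro ⟨a, i⟩ ⟨b, j⟩ hab
  simp only [enc] at hab
  have hij : i = j := by
    cases a <;> cases b <;> simp at hab <;> omega
  subst hij
  have : a = b := by cases a <;> cases b <;> simp at hab ⊢ <;> omega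
  simp [this]

/-- The key of a node: the colex order of the encoded reachability set. -/
noncomputable def key (v : Bool × Fin n) : Colex (Finset ℕ) :=
  toColex ((reachSet x h v).image enc)

lemma key_le_of_reach {v w : Bool × Fin n} (hvw : Reach x h v w) :
    key x h w ≤ key x h v := by
  apply Finset.Colex.toColex_le_toColex_of_subset
  apply Finset.image_subset_image
  intro u hu
  rw [mem_reachSet] at hu ⊢
  exact hvw.trans hu

lemma reach_of_key_eq {v w : Bool × Fin n} (hk : key x h v = key x h w) :
    Reach x h w v := by
  have hsets : reachSet x h v = reachSet x h w :=
    Finset.image_injective enc_inj (toColex_inj.mp hk)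
  have : v ∈ reachSet x h v := (mem_reachSet x h).mpr Relation.ReflTransGen.refl
  rw [hsets, mem_reachSet] at this
  exact this

lemma badNode_of_self_reach {σ : Bool} {i : Fin n}
    (hr : Reach x h (σ, i) (!σ, i)) : BadNode x h (σ, i) := by
  cases σ
  · exact ⟨i, Relation.ReflTransGen.refl, hr⟩
  · exact ⟨i, hr, Relation.ReflTransGen.refl⟩

end Stmt3Aux

/-- If for every item at least one of its two nodes is not bad, then there is a legal
placement of all `n` items. -/
theorem stmt3 {U : Type*} {n m : ℕ} (x : Fin n → U) (h : Bool → U → Fin m)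
    (hgood : ∀ i : Fin n, ¬ BadNode x h (false, i) ∨ ¬ BadNode x h (true, i)) :
    ∃ τ : Fin n → Bool, ∀ i j : Fin n, i ≠ j → τ i = τ j →
      h (τ i) (x i) ≠ h (τ j) (x j) := by
  classical
  open Stmt3Aux in
  -- keys of the two nodes of an item are never equal
  have hkey_ne : ∀ i : Fin n, key x h (false, i) ≠ key x h (true, i) := by
    intro i heq
    have h1 : Reach x h (true, i) (false, i) := reach_of_key_eq x h heq
    have h2 : Reach x h (false, i) (true, i) := reach_of_key_eq x h heq.symm
    have b1 : BadNode x h (false, i) := badNode_of_self_reach x h (σ := false) h2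
    have b2 : BadNode x h (true, i) := by
      have := badNode_of_self_reach x h (σ := true) (i := i)
      simpa using this h1
    rcases hgood i with hg | hg <;> [exact hg b1; exact hg b2]
  -- choose the node with the smaller key
  refine ⟨fun i => if key x h (true, i) < key x h (false, i) then true else false, ?_⟩
  intro i j hij hτ hcol
  set τ : Fin n → Bool := fun i =>
    if key x h (true, i) < key x h (false, i) then true else false with hτdef
  have chosen : ∀ k : Fin n, key x h (τ k, k) < key x h (!τ k, k) := by
    intro k
    by_cases hk : key x h (true, k) < key x h (false, k)
    · simpa [hτdef, hk] using hk
    · have : key x h (false, k) < key x h (true, k) :=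
        lt_of_le_of_ne (not_lt.mp hk) (hkey_ne k)
      simpa [hτdef, hk] using this
  -- the edge from (τ i, i) to (!τ i, j)
  have hedge : InfAdj x h (τ i, i) (!τ i, j) := ⟨rfl, hij, by simpa [hτ] using hcol⟩
  have hreach : Reach x h (τ i, i) (!τ i, j) := Relation.ReflTransGen.single hedge
  have hreach' : Reach x h (τ i, j) (!τ i, i) := by
    have := reach_neg x h hreach
    simpa [neg] using this
  have c1 : key x h (!τ i, j) ≤ key x h (τ i, i) := key_le_of_reach x h hreach
  have c2 : key x h (!τ i, i) ≤ key x h (τ i, j) := key_le_of_reach x h hreach'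
  have c3 : key x h (τ i, i) < key x h (!τ i, i) := chosen i
  have c4 : key x h (τ i, j) < key x h (!τ i, j) := by
    have := chosen j
    rwa [← hτ] at this
  exact absurd (c1.trans_lt (c3.trans_le c2)) (not_lt.mpr c4.le)
end

section
/- If an item i is bad (cannot be legally placed together with the others), then there is no legal placement: there is no τ : Fin n → Bool assigning each item a table such that items in the same table never collide. More precisely: if for some i both nodes a^0_i and a^1_i are bad, then no legal placement exists in which item i is placed anywhere. -/
lemma reach_forces {U : Type*} {n m : ℕ} (x : Fin n → U) (h : Bool → U → Fin m)
    (τ : Fin n → Bool)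
    (hleg : ∀ i j : Fin n, i ≠ j → τ i = τ j → h (τ i) (x i) ≠ h (τ j) (x j))
    {v w : Bool × Fin n} (hr : Reach x h v w) (hv : τ v.2 = v.1) : τ w.2 = w.1 := by
  induction hr with
  | refl => exact hv
  | tail _ hstep ih =>
    obtain ⟨h1, h2, h3⟩ := hstep
    rename_i b c _
    by_contra hc
    have : τ c.2 = b.1 := by
      cases hb : τ c.2 <;> cases hb2 : b.1 <;> simp_all
    exact hleg b.2 c.2 h2 (by rw [ih, this]) (by rw [ih, this]; exact h3)

theorem stmt4' {U : Type*} {n m : ℕ} (x : Fin n → U) (h : Bool → U → Fin m)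
    (i : Fin n) (hbad : BadNode x h (false, i) ∧ BadNode x h (true, i)) :
    ¬ ∃ τ : Fin n → Bool, ∀ i j : Fin n, i ≠ j → τ i = τ j →
      h (τ i) (x i) ≠ h (τ j) (x j) := by
  rintro ⟨τ, hleg⟩
  have key : BadNode x h (τ i, i) := by cases hτ : τ i <;> simp [hτ, hbad.1, hbad.2]
  obtain ⟨j, hf, ht⟩ := key
  have h1 := reach_forces x h τ hleg hf rfl
  have h2 := reach_forces x h τ hleg ht rfl
  simp at h1 h2; rw [h1] at h2; exact Bool.false_ne_true h2
/-- If item `i` is bad (both of its nodes are bad), then no legal placement exists. -/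
theorem stmt4 {U : Type*} {n m : ℕ} (x : Fin n → U) (h : Bool → U → Fin m)
    (i : Fin n) (hbad : BadNode x h (false, i) ∧ BadNode x h (true, i)) :
    ¬ ∃ τ : Fin n → Bool, ∀ i j : Fin n, i ≠ j → τ i = τ j →
      h (τ i) (x i) ≠ h (τ j) (x j) := by
  exact stmt4' x h i hbad
end

section
/- In any legal placement τ : Fin n → Bool, if node (τ(i), i) reaches node (γ, j) in the inference graph, then τ(j) = γ. -/
/-- In any legal placement `τ`, if node `(τ i, i)` reaches node `(γ, j)` in the
inference graph, then `τ j = γ`. -/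
theorem stmt5 {U : Type*} {n m : ℕ} (x : Fin n → U) (h : Bool → U → Fin m)
    (τ : Fin n → Bool)
    (hlegal : ∀ i j : Fin n, i ≠ j → τ i = τ j → h (τ i) (x i) ≠ h (τ j) (x j))
    (i j : Fin n) (γ : Bool)
    (hreach : Relation.ReflTransGen (InfAdj x h) (τ i, i) (γ, j)) :
    τ j = γ := by
  suffices H : ∀ p : Bool × Fin n,
      Relation.ReflTransGen (InfAdj x h) (τ i, i) p → τ p.2 = p.1 by
    exact H (γ, j) hreach
  intro p hp
  induction hp with
  | refl => rfl
  | tail _ hadj ih =>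
    rename_i b c _
    obtain ⟨h1, h2, h3⟩ := hadj
    by_contra hne
    have hc : τ c.2 = b.1 := by
      rw [h1] at hne
      cases hb : b.1 <;> cases hcb : τ c.2 <;> simp_all
    exact hlegal b.2 c.2 h2 (by rw [ih, hc]) (by rw [ih, hc]; exact h3)
end

section
/- If m ≥ (1+ε)n with ε > 0 and h₀,h₁ are independent uniform random functions U → Fin m, then the probability that the node a^0_i is the root of some basic bad path is at most (1+ε)/(ε·m). -/
/-- `(false, i)` is the root of a basic bad path: a simple directed path from
`(false, i)` to `(true, i)` in which for every item `j ≠ i` at most one of the two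
nodes of `j` appears. -/
def RootOfBasicBadPath {U : Type*} {n m : ℕ} (x : Fin n → U) (h : Bool → U → Fin m)
    (i : Fin n) : Prop :=
  ∃ p : List (Bool × Fin n),
    p.Chain' (InfAdj x h) ∧
    p.head? = some (false, i) ∧
    p.getLast? = some (true, i) ∧
    p.Nodup ∧
    ∀ j : Fin n, j ≠ i → ¬ ((false, j) ∈ p ∧ (true, j) ∈ p)


open Classical in
lemma core_count {U : Type*} [Fintype U] (m : ℕ) :
    ∀ L : List (U × U), (L.map Prod.fst).Nodup →
    (∀ a ∈ L.map Prod.fst, a ∉ L.map Prod.snd) →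
    Nat.card {f : U → Fin m // ∀ pr ∈ L, f pr.1 = f pr.2} * m ^ L.length
      ≤ m ^ (Fintype.card U) := by
  intro L
  induction L with
  | nil =>
    intro _ _
    simp only [List.length_nil, pow_zero, mul_one]
    have : {f : U → Fin m // ∀ pr ∈ ([] : List (U × U)), f pr.1 = f pr.2} ≃ (U → Fin m) :=
      Equiv.subtypeUnivEquiv (by simp)
    rw [Nat.card_congr this, Nat.card_fun]
    simp
  | cons hd tl ih =>
    intro hnd hdisj
    obtain ⟨a, b⟩ := hd
    simp only [List.map_cons, List.nodup_cons] at hnd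
    have hab : a ≠ b := by
      have := hdisj a (by simp) 
      simp only [List.map_cons, List.mem_cons] at this
      tauto
    have hafst : ∀ pr ∈ tl, pr.1 ≠ a := by
      intro pr hpr h
      exact hnd.1 (h ▸ List.mem_map_of_mem (f := Prod.fst) hpr)
    have hasnd : ∀ pr ∈ tl, pr.2 ≠ a := by
      intro pr hpr h
      have := hdisj a (by simp)
      simp only [List.map_cons, List.mem_cons] at this
      exact this (Or.inr (h ▸ List.mem_map_of_mem (f := Prod.snd) hpr))
    -- the injection
    set T1 := {f : U → Fin m // ∀ pr ∈ (a, b) :: tl, f pr.1 = f pr.2}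
    set T2 := {f : U → Fin m // ∀ pr ∈ tl, f pr.1 = f pr.2}
    have key : Nat.card T1 * m ≤ Nat.card T2 := by
      have hΦ : Function.Injective (fun fv : T1 × Fin m =>
          (⟨Function.update fv.1.1 a fv.2, by
            intro pr hpr
            rw [Function.update_of_ne (hafst pr hpr), Function.update_of_ne (hasnd pr hpr)]
            exact fv.1.2 pr (List.mem_cons_of_mem _ hpr)⟩ : T2)) := by
        rintro ⟨⟨f, hf⟩, v⟩ ⟨⟨g, hg⟩, w⟩ h
        simp only [Subtype.mk.injEq] at h
        have hv : v = w := by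
          have := congrFun h a
          simpa using this
        have hfg : f = g := by
          funext u
          by_cases hu : u = a
          · rw [hu]
            have h1 : f a = f b := hf (a, b) List.mem_cons_self
            have h2 : g a = g b := hg (a, b) List.mem_cons_self
            have h3 : f b = g b := by
              have := congrFun h b
              rwa [Function.update_of_ne (Ne.symm hab), Function.update_of_ne (Ne.symm hab)] at this
            rw [h1, h2, h3]
          · have := congrFun h u
            rwa [Function.update_of_ne hu, Function.update_of_ne hu] at this
        simp [hv, hfg]
      calc Nat.card T1 * m = Nat.card (T1 × Fin m) := by rw [Nat.card_prod, Nat.card_eq_fintype_card (α := Fin m), Fintype.card_fin]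
        _ ≤ Nat.card T2 := Nat.card_le_card_of_injective _ hΦ
    have ihtl : Nat.card T2 * m ^ tl.length ≤ m ^ Fintype.card U := by
      apply ih hnd.2
      intro c hc hc2
      have := hdisj c (by simp [hc])
      simp only [List.map_cons, List.mem_cons] at this
      exact this (Or.inr hc2)
    calc Nat.card T1 * m ^ ((a,b) :: tl).length
        = (Nat.card T1 * m) * m ^ tl.length := by
          simp [List.length_cons, pow_succ]; ring
      _ ≤ Nat.card T2 * m ^ tl.length := Nat.mul_le_mul_right _ key
      _ ≤ m ^ Fintype.card U := ihtl

namespace Stmt10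

variable {U : Type*} {n m : ℕ}

def flatI (B : List (Fin n × Fin n)) : List (Fin n) :=
  B.flatMap fun c => [c.1, c.2]

def flatG (B : List (Fin n × Fin n)) : List (Bool × Fin n) :=
  B.flatMap fun c => [(true, c.1), (false, c.2)]

def L0 (i : Fin n) : List (Fin n × Fin n) → Fin n → List (Fin n × Fin n)
  | [], u => [(u, i)]
  | c :: B, u => (c.1, u) :: L0 i B c.2

def L1 (B : List (Fin n × Fin n)) : List (Fin n × Fin n) :=
  B.map fun c => (c.2, c.1)

def Facts (x : Fin n → U) (i : Fin n) (h₀ h₁ : U → Fin m) :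
    List (Fin n × Fin n) → Fin n → Prop
  | [], u => h₀ (x u) = h₀ (x i)
  | c :: B, u => h₀ (x u) = h₀ (x c.1) ∧ h₁ (x c.1) = h₁ (x c.2) ∧ Facts x i h₀ h₁ B c.2

@[simp] lemma flatI_nil : flatI ([] : List (Fin n × Fin n)) = [] := rfl
@[simp] lemma flatI_cons (c : Fin n × Fin n) (B : List (Fin n × Fin n)) :
    flatI (c :: B) = c.1 :: c.2 :: flatI B := rfl
@[simp] lemma flatG_nil : flatG ([] : List (Fin n × Fin n)) = [] := rfl
@[simp] lemma flatG_cons (c : Fin n × Fin n) (B : List (Fin n × Fin n)) :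
    flatG (c :: B) = (true, c.1) :: (false, c.2) :: flatG B := rfl

lemma map_snd_flatG (B : List (Fin n × Fin n)) : (flatG B).map Prod.snd = flatI B := by
  induction B with
  | nil => rfl
  | cons c B ih => simp [ih]

lemma length_flatI (B : List (Fin n × Fin n)) : (flatI B).length = 2 * B.length := by
  induction B with
  | nil => rfl
  | cons c B ih => simp [ih]; ring

lemma length_L0 (i : Fin n) (B : List (Fin n × Fin n)) (u : Fin n) :
    (L0 i B u).length = B.length + 1 := by
  induction B generalizing u with
  | nil => rfl
  | cons c B ih => simp [L0, ih]

lemma L0_fst_subset (i : Fin n) : ∀ (B : List (Fin n × Fin n)) (u : Fin n),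
    ∀ a ∈ (L0 i B u).map Prod.fst, a ∈ u :: flatI B := by
  intro B
  induction B with
  | nil => intro u a ha; simp [L0] at ha; simp [ha]
  | cons c B ih =>
    intro u a ha
    simp only [L0, List.map_cons, List.mem_cons] at ha
    rcases ha with h | h
    · simp [h]
    · have := ih c.2 a h
      simp only [List.mem_cons, flatI_cons] at this ⊢
      tauto

lemma L0_snd_subset (i : Fin n) : ∀ (B : List (Fin n × Fin n)) (u : Fin n),
    ∀ a ∈ (L0 i B u).map Prod.snd, a ∈ i :: u :: flatI B := by
  intro B
  induction B with
  | nil => intro u a ha; simp [L0] at ha; simp [ha]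
  | cons c B ih =>
    intro u a ha
    simp only [L0, List.map_cons, List.mem_cons] at ha
    rcases ha with h | h
    · simp [h]
    · have := ih c.2 a h
      simp only [List.mem_cons, flatI_cons] at this ⊢
      tauto

lemma L0_good (i : Fin n) : ∀ (B : List (Fin n × Fin n)) (u : Fin n),
    (B ≠ [] ∨ u ≠ i) → (u :: flatI B).Nodup → i ∉ flatI B →
    ((L0 i B u).map Prod.fst).Nodup ∧
    (∀ a ∈ (L0 i B u).map Prod.fst, a ∉ (L0 i B u).map Prod.snd) := by
  intro B
  induction B with
  | nil =>
    intro u hne _ _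
    refine ⟨by simp [L0], ?_⟩
    intro a ha
    simp only [L0, List.map_cons, List.map_nil, List.mem_singleton] at ha ⊢
    rw [ha]
    simpa using hne
  | cons c B ih =>
    intro u _ hnd hiB
    simp only [flatI_cons, List.nodup_cons, List.mem_cons, not_or] at hnd hiB
    obtain ⟨⟨hu1, hu2, hu3⟩, hnd2⟩ := hnd
    obtain ⟨⟨hc12, hc1B⟩, hnd3⟩ := hnd2
    obtain ⟨hic1, hic2, hiB'⟩ := hiB
    have ih' := ih c.2 (Or.inr (fun h => hic2 h.symm))
      (by simp only [List.nodup_cons]; exact ⟨hnd3.1, hnd3.2⟩) hiB'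
    obtain ⟨ihnd, ihdisj⟩ := ih'
    have hfsub := L0_fst_subset i B c.2
    have hssub := L0_snd_subset i B c.2
    constructor
    · simp only [L0, List.map_cons, List.nodup_cons]
      refine ⟨fun h => ?_, ihnd⟩
      have := hfsub c.1 h
      simp only [List.mem_cons] at this
      rcases this with h' | h'
      · exact hc12 h'
      · exact hc1B h'
    · intro a ha
      simp only [L0, List.map_cons, List.mem_cons] at ha ⊢
      push_neg
      rcases ha with h | ha
      · subst h
        refine ⟨fun h => hu1 h.symm, fun h => ?_⟩
        have := hssub _ h
        simp only [List.mem_cons] at this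
        rcases this with h' | h' | h'
        · exact hic1 h'.symm
        · exact hc12 h'
        · exact hc1B h'
      · refine ⟨fun h => ?_, ihdisj a ha⟩
        have := hfsub a ha
        simp only [List.mem_cons] at this
        subst h
        rcases this with h' | h'
        · exact hu2 h'
        · exact hu3 h'

lemma fst_mem_flatI {B : List (Fin n × Fin n)} {c : Fin n × Fin n} (hc : c ∈ B) :
    c.1 ∈ flatI B := by
  induction B with
  | nil => simp at hc
  | cons d D ih =>
    rcases List.mem_cons.mp hc with rfl | h
    · simp
    · simp only [flatI_cons, List.mem_cons]; exact Or.inr (Or.inr (ih h))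

lemma snd_mem_flatI {B : List (Fin n × Fin n)} {c : Fin n × Fin n} (hc : c ∈ B) :
    c.2 ∈ flatI B := by
  induction B with
  | nil => simp at hc
  | cons d D ih =>
    rcases List.mem_cons.mp hc with rfl | h
    · simp
    · simp only [flatI_cons, List.mem_cons]; exact Or.inr (Or.inr (ih h))

lemma L1_good : ∀ B : List (Fin n × Fin n), (flatI B).Nodup →
    ((L1 B).map Prod.fst).Nodup ∧
    (∀ a ∈ (L1 B).map Prod.fst, a ∉ (L1 B).map Prod.snd) := by
  intro B
  have hfst : (L1 B).map Prod.fst = B.map Prod.snd := by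
    simp [L1, List.map_map, Function.comp]
  have hsnd : (L1 B).map Prod.snd = B.map Prod.fst := by
    simp [L1, List.map_map, Function.comp]
  rw [hfst, hsnd]
  induction B with
  | nil => simp
  | cons c B ih =>
    intro hnd
    simp only [flatI_cons, List.nodup_cons, List.mem_cons, not_or] at hnd
    obtain ⟨⟨h12, h1B⟩, ⟨h2B, hndB⟩⟩ := hnd
    obtain ⟨ihnd, ihdisj⟩ := ih (by simp [L1, List.map_map, Function.comp])
      (by simp [L1, List.map_map, Function.comp]) hndB
    constructor
    · simp only [List.map_cons, List.nodup_cons]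
      refine ⟨fun h => ?_, ihnd⟩
      obtain ⟨c', hc', h'⟩ := List.mem_map.mp h
      exact h2B (h' ▸ snd_mem_flatI hc')
    · intro a ha
      simp only [List.map_cons, List.mem_cons] at ha ⊢
      push_neg
      rcases ha with h | ha
      · subst h
        refine ⟨fun h => h12 h.symm, fun h => ?_⟩
        obtain ⟨c', hc', h'⟩ := List.mem_map.mp h
        exact h2B (h' ▸ fst_mem_flatI hc')
      · refine ⟨fun h => ?_, ihdisj a ha⟩
        obtain ⟨c', hc', h'⟩ := List.mem_map.mp ha
        exact h1B (h ▸ h' ▸ snd_mem_flatI hc')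

lemma shape (x : Fin n → U) (i : Fin n) (h : Bool → U → Fin m) :
    ∀ (N : ℕ) (p : List (Bool × Fin n)), p.length ≤ N →
    p.Chain' (InfAdj x h) → ∀ j : Fin n, p.head? = some (false, j) →
    p.getLast? = some (true, i) →
    ∃ B : List (Fin n × Fin n), p = (false, j) :: (flatG B ++ [(true, i)]) := by
  intro N
  induction N with
  | zero =>
    intro p hlen _ j hhead _
    interval_cases hp : p.length
    · rw [List.length_eq_zero_iff.mp hp] at hhead; simp at hhead
  | succ N ih =>
    intro p hlen hchain j hhead hlast
    match p, hhead with
    | (b, j') :: rest, hhead =>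
      simp only [List.head?_cons, Option.some.injEq, Prod.mk.injEq] at hhead
      obtain ⟨rfl, rfl⟩ := hhead
      match rest, hlast with
      | [], hlast => simp at hlast
      | w :: rest2, hlast =>
        have hadj1 : InfAdj x h (false, j') w := (List.isChain_cons_cons.mp hchain).1
        have hchain2 : (w :: rest2).Chain' (InfAdj x h) := (List.isChain_cons_cons.mp hchain).2
        obtain ⟨w1, w2⟩ := w
        have hw1 : w1 = true := hadj1.1
        subst hw1
        match rest2, hlast with
        | [], hlast =>
          have : (true, w2) = (true, i) := by simpa using hlast
          injection this with _ h2
          subst h2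
          exact ⟨[], rfl⟩
        | z :: rest3, hlast =>
          have hadj2 : InfAdj x h (true, w2) z := (List.isChain_cons_cons.mp hchain2).1
          have hchain3 : (z :: rest3).Chain' (InfAdj x h) := (List.isChain_cons_cons.mp hchain2).2
          obtain ⟨z1, z2⟩ := z
          have hz1 : z1 = false := by simpa using hadj2.1
          subst hz1
          have hlen3 : ((false, z2) :: rest3).length ≤ N := by
            simp only [List.length_cons] at hlen ⊢
            omega
          have hlast3 : ((false, z2) :: rest3).getLast? = some (true, i) := by
            rw [List.getLast?_cons_cons, List.getLast?_cons_cons] at hlast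
            exact hlast
          obtain ⟨B', hB'⟩ := ih _ hlen3 hchain3 z2 (by simp) hlast3
          refine ⟨(w2, z2) :: B', ?_⟩
          simp only [flatG_cons, List.cons_append]
          rw [← hB']

lemma chain_facts (x : Fin n → U) (i : Fin n) (h₀ h₁ : U → Fin m) :
    ∀ (B : List (Fin n × Fin n)) (u : Fin n),
    (((false, u) :: (flatG B ++ [(true, i)])) :
        List (Bool × Fin n)).Chain' (InfAdj x (fun b => bif b then h₁ else h₀)) →
    Facts x i h₀ h₁ B u := by
  intro B
  induction B with
  | nil =>
    intro u hchain
    have : InfAdj x (fun b => bif b then h₁ else h₀) (false, u) (true, i) := by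
      simpa using (List.isChain_cons_cons.mp hchain).1
    exact this.2.2
  | cons c B ih =>
    intro u hchain
    simp only [flatG_cons, List.cons_append] at hchain
    have h1 := (List.isChain_cons_cons.mp hchain).1
    have hch2 := (List.isChain_cons_cons.mp hchain).2
    have h2 := (List.isChain_cons_cons.mp hch2).1
    have hch3 := (List.isChain_cons_cons.mp hch2).2
    exact ⟨h1.2.2, h2.2.2, ih c.2 hch3⟩

lemma facts_L0 (x : Fin n → U) (i : Fin n) (h₀ h₁ : U → Fin m) :
    ∀ (B : List (Fin n × Fin n)) (u : Fin n), Facts x i h₀ h₁ B u →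
    ∀ pr ∈ L0 i B u, h₀ (x pr.1) = h₀ (x pr.2) := by
  intro B
  induction B with
  | nil =>
    intro u hf pr hpr
    simp only [L0, List.mem_singleton] at hpr
    subst hpr
    exact hf
  | cons c B ih =>
    intro u hf pr hpr
    simp only [L0, List.mem_cons] at hpr
    rcases hpr with rfl | hpr
    · exact hf.1.symm
    · exact ih c.2 hf.2.2 pr hpr

lemma facts_L1 (x : Fin n → U) (i : Fin n) (h₀ h₁ : U → Fin m) :
    ∀ (B : List (Fin n × Fin n)) (u : Fin n), Facts x i h₀ h₁ B u →
    ∀ pr ∈ L1 B, h₁ (x pr.1) = h₁ (x pr.2) := by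
  intro B
  induction B with
  | nil => intro u _ pr hpr; simp [L1] at hpr
  | cons c B ih =>
    intro u hf pr hpr
    simp only [L1, List.map_cons, List.mem_cons] at hpr
    rcases hpr with rfl | hpr
    · exact hf.2.1.symm
    · exact ih c.2 hf.2.2 pr hpr

lemma extract {x : Fin n → U} {i : Fin n} {h₀ h₁ : U → Fin m}
    (hP : RootOfBasicBadPath x (fun b => bif b then h₁ else h₀) i) :
    ∃ B : List (Fin n × Fin n), B ≠ [] ∧ B.length ≤ n ∧ (i :: flatI B).Nodup ∧
      Facts x i h₀ h₁ B i := by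
  obtain ⟨p, hchain, hhead, hlast, hnodup, hcond⟩ := hP
  obtain ⟨B, rfl⟩ := shape x i _ p.length p le_rfl hchain i hhead hlast
  simp only [List.nodup_cons, List.nodup_append] at hnodup
  obtain ⟨hni, hndG, _, hdisjG⟩ := hnodup
  have hmemp : ∀ v ∈ flatG B, v ∈ (false, i) :: (flatG B ++ [(true, i)]) := by
    intro v hv
    exact List.mem_cons_of_mem _ (List.mem_append_left _ hv)
  have hiflat : i ∉ flatI B := by
    intro hi
    rw [← map_snd_flatG] at hi
    obtain ⟨v, hv, hv2⟩ := List.mem_map.mp hi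
    obtain ⟨b, j⟩ := v
    simp only at hv2
    subst hv2
    cases b
    · exact hni (List.mem_append_left _ hv)
    · exact hdisjG _ hv _ (List.mem_singleton.mpr rfl) rfl
  have hkey : (i :: flatI B).Nodup := by
    rw [List.nodup_cons]
    refine ⟨hiflat, ?_⟩
    rw [← map_snd_flatG]
    refine List.Nodup.map_on ?_ hndG
    intro v hv w hw hvw
    by_contra hne
    obtain ⟨bv, jv⟩ := v
    obtain ⟨bw, jw⟩ := w
    simp only at hvw
    subst hvw
    have hbne : bv ≠ bw := fun h => hne (by rw [h])
    have hji : jv ≠ i := by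
      intro h
      subst h
      exact hiflat (by rw [← map_snd_flatG]; exact List.mem_map.mpr ⟨(bv, jv), hv, rfl⟩)
    refine hcond jv hji ⟨?_, ?_⟩
    · cases bv
      · exact hmemp _ hv
      · cases bw
        · exact hmemp _ hw
        · exact absurd rfl hbne
    · cases bv
      · cases bw
        · exact absurd rfl hbne
        · exact hmemp _ hw
      · exact hmemp _ hv
  refine ⟨B, ?_, ?_, hkey, ?_⟩
  · rintro rfl
    have : InfAdj x (fun b => bif b then h₁ else h₀) (false, i) (true, i) := by
      simpa using (List.isChain_cons_cons.mp hchain).1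
    exact this.2.1 rfl
  · have hnd : (i :: flatI B).Nodup := hkey
    have := hnd.length_le_card
    simp only [List.length_cons, length_flatI, Fintype.card_fin] at this
    omega
  · exact chain_facts x i h₀ h₁ B i hchain




lemma length_L1 {n : ℕ} (B : List (Fin n × Fin n)) : (L1 B).length = B.length := by simp [L1]

open Classical

noncomputable def ConB [Fintype U] (x : Fin n → U) (i : Fin n)
    (B : List (Fin n × Fin n)) (ω : (U → Fin m) × (U → Fin m)) : Prop :=
  (∀ pr ∈ (L0 i B i).map (fun pr => (x pr.1, x pr.2)), ω.1 pr.1 = ω.1 pr.2) ∧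
  (∀ pr ∈ (L1 B).map (fun pr => (x pr.1, x pr.2)), ω.2 pr.1 = ω.2 pr.2)

noncomputable def QB [Fintype U] (x : Fin n → U) (i : Fin n)
    (B : List (Fin n × Fin n)) (ω : (U → Fin m) × (U → Fin m)) : Prop :=
  B ≠ [] ∧ (i :: flatI B).Nodup ∧ ConB x i B ω

lemma map_list_good {α β : Type*} {f : α → β} (hf : Function.Injective f)
    (L : List (α × α)) (h1 : (L.map Prod.fst).Nodup)
    (h2 : ∀ a ∈ L.map Prod.fst, a ∉ L.map Prod.snd) :
    ((L.map (fun pr => (f pr.1, f pr.2))).map Prod.fst).Nodup ∧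
    (∀ a ∈ (L.map (fun pr => (f pr.1, f pr.2))).map Prod.fst,
      a ∉ (L.map (fun pr => (f pr.1, f pr.2))).map Prod.snd) := by
  have e1 : (L.map (fun pr => (f pr.1, f pr.2))).map Prod.fst = (L.map Prod.fst).map f := by
    simp [List.map_map, Function.comp]
  have e2 : (L.map (fun pr => (f pr.1, f pr.2))).map Prod.snd = (L.map Prod.snd).map f := by
    simp [List.map_map, Function.comp]
  rw [e1, e2]
  refine ⟨h1.map hf, ?_⟩
  intro a ha hb
  obtain ⟨c, hc, rfl⟩ := List.mem_map.mp ha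
  obtain ⟨d, hd, hdc⟩ := List.mem_map.mp hb
  exact h2 c hc (hf hdc ▸ hd)

lemma count_QB [Fintype U] {x : Fin n → U} (hx : Function.Injective x) (i : Fin n)
    (B : List (Fin n × Fin n)) :
    ((Finset.univ.filter (QB (m := m) x i B)).card : ℕ) * m ^ (2 * B.length + 1)
      ≤ m ^ (2 * Fintype.card U) := by
  by_cases hB : B ≠ [] ∧ (i :: flatI B).Nodup
  case neg =>
    have : Finset.univ.filter (QB (m := m) x i B) = ∅ := by
      apply Finset.filter_false_of_mem
      intro ω _ hω
      exact hB ⟨hω.1, hω.2.1⟩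
    simp [this]
  case pos =>
    obtain ⟨hBne, hBnd⟩ := hB
    have hnd' : (flatI B).Nodup := (List.nodup_cons.mp hBnd).2
    have hiB : i ∉ flatI B := (List.nodup_cons.mp hBnd).1
    obtain ⟨hL0nd, hL0disj⟩ := L0_good i B i (Or.inl hBne) hBnd hiB
    obtain ⟨hL1nd, hL1disj⟩ := L1_good B hnd'
    obtain ⟨hL0nd', hL0disj'⟩ := map_list_good hx _ hL0nd hL0disj
    obtain ⟨hL1nd', hL1disj'⟩ := map_list_good hx _ hL1nd hL1disj
    have c0 := core_count m _ hL0nd' hL0disj'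
    have c1 := core_count m _ hL1nd' hL1disj'
    rw [List.length_map, length_L0] at c0
    rw [List.length_map, length_L1] at c1
    have hsub : (Finset.univ.filter (QB (m := m) x i B)).card
        ≤ (Finset.univ.filter (ConB x i B (m := m))).card := by
      apply Finset.card_le_card
      intro ω hω
      simp only [Finset.mem_filter] at hω ⊢
      exact ⟨hω.1, hω.2.2.2⟩
    have hcard : (Finset.univ.filter (ConB x i B (m := m))).card
        = Nat.card {f : U → Fin m // ∀ pr ∈ (L0 i B i).map (fun pr => (x pr.1, x pr.2)),
            f pr.1 = f pr.2}
          * Nat.card {f : U → Fin m // ∀ pr ∈ (L1 B).map (fun pr => (x pr.1, x pr.2)),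
            f pr.1 = f pr.2} := by
      rw [← Nat.card_prod]
      rw [← Nat.card_congr (Equiv.subtypeProdEquivProd
        (p := fun f : U → Fin m => ∀ pr ∈ (L0 i B i).map (fun pr => (x pr.1, x pr.2)),
            f pr.1 = f pr.2)
        (q := fun f : U → Fin m => ∀ pr ∈ (L1 B).map (fun pr => (x pr.1, x pr.2)),
            f pr.1 = f pr.2))]
      rw [Nat.card_eq_fintype_card, Fintype.card_subtype]
      congr 1
      apply Finset.filter_congr
      intro ω _
      rfl
    calc (Finset.univ.filter (QB (m := m) x i B)).card * m ^ (2 * B.length + 1)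
        ≤ (Finset.univ.filter (ConB x i B (m := m))).card * m ^ (2 * B.length + 1) :=
          Nat.mul_le_mul_right _ hsub
      _ = (Nat.card {f : U → Fin m // ∀ pr ∈ (L0 i B i).map (fun pr => (x pr.1, x pr.2)),
            f pr.1 = f pr.2} * m ^ (B.length + 1))
          * (Nat.card {f : U → Fin m // ∀ pr ∈ (L1 B).map (fun pr => (x pr.1, x pr.2)),
            f pr.1 = f pr.2} * m ^ B.length) := by
          rw [hcard]
          rw [show 2 * B.length + 1 = (B.length + 1) + B.length by ring, pow_add]
          ring
      _ ≤ m ^ Fintype.card U * m ^ Fintype.card U := Nat.mul_le_mul c0 c1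
      _ = m ^ (2 * Fintype.card U) := by rw [← pow_add]; ring_nf

end Stmt10

open Stmt10 Classical in
/-- If `m ≥ (1+ε)n`, then for independent uniform hash functions `h₀, h₁` the
probability that the node `a⁰ᵢ` is the root of a basic bad path is at most
`(1+ε) / (ε m)`. -/
theorem stmt10 {U : Type*} [Fintype U] (n m : ℕ) (ε : ℝ) (hε : 0 < ε)
    (hm : (1 + ε) * n ≤ m)
    (x : Fin n → U) (hx : Function.Injective x) (i : Fin n) :
    (Nat.card {p : (U → Fin m) × (U → Fin m) //
        RootOfBasicBadPath x (fun b => bif b then p.2 else p.1) i} : ℝ) /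
      Nat.card ((U → Fin m) × (U → Fin m)) ≤ (1 + ε) / (ε * m) := by
  have hn : 0 < n := i.pos
  have hmR : (1 + ε) * n ≤ (m : ℝ) := hm
  have hmpos : (0 : ℝ) < m := lt_of_lt_of_le (by positivity) hmR
  have hm0 : 0 < m := by exact_mod_cast hmpos
  set u := Fintype.card U with hu
  set P : (U → Fin m) × (U → Fin m) → Prop :=
    fun ω => RootOfBasicBadPath x (fun b => bif b then ω.2 else ω.1) i with hP
  -- numerator as a filter card
  have hnum : Nat.card {p : (U → Fin m) × (U → Fin m) //
      RootOfBasicBadPath x (fun b => bif b then p.2 else p.1) i}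
      = (Finset.univ.filter P).card := by
    rw [Nat.card_eq_fintype_card, Fintype.card_subtype]
  -- denominator
  have hden : Nat.card ((U → Fin m) × (U → Fin m)) = m ^ (2 * u) := by
    rw [Nat.card_prod, Nat.card_fun]
    simp [Nat.card_eq_fintype_card, two_mul, pow_add, hu]
  -- certificate map
  set V := (s : Fin (n + 1)) × (Fin (s : ℕ) → Fin n × Fin n) with hV
  set F : ((U → Fin m) × (U → Fin m)) → V := fun ω =>
    if h : P ω then
      ⟨⟨(extract h).choose.length, by
          have := (extract h).choose_spec.2.1; omega⟩,
        fun t => (extract h).choose.get ⟨t.1, t.2⟩⟩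
    else ⟨⟨0, Nat.succ_pos n⟩, Fin.elim0⟩ with hF
  -- fiber bound
  have fiber_bound : ∀ v : V,
      ((Finset.univ.filter P).filter (fun ω => F ω = v)).card
        ≤ (Finset.univ.filter (QB (m := m) x i (List.ofFn v.2))).card := by
    intro v
    apply Finset.card_le_card
    intro ω hω
    simp only [Finset.mem_filter, Finset.mem_univ, true_and] at hω ⊢
    obtain ⟨hPω, hFω⟩ := hω
    obtain ⟨hne, hlen, hnd, hfacts⟩ := (extract hPω).choose_spec
    have hv : v = ⟨⟨(extract hPω).choose.length, by
          have := (extract hPω).choose_spec.2.1; omega⟩,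
        fun t => (extract hPω).choose.get ⟨t.1, t.2⟩⟩ := by
      rw [← hFω, hF]
      exact dif_pos hPω
    subst hv
    have hofn : List.ofFn (fun t => (extract hPω).choose.get ⟨t.1, t.2⟩ :
        Fin (((⟨(extract hPω).choose.length, by
          have := (extract hPω).choose_spec.2.1; omega⟩ : Fin (n+1)) : ℕ)) → Fin n × Fin n)
        = (extract hPω).choose := List.ofFn_get _
    rw [hofn]
    refine ⟨hne, hnd, ?_, ?_⟩
    · intro pr hpr
      obtain ⟨q, hq, rfl⟩ := List.mem_map.mp hpr
      exact facts_L0 x i ω.1 ω.2 _ i hfacts q hq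
    · intro pr hpr
      obtain ⟨q, hq, rfl⟩ := List.mem_map.mp hpr
      exact facts_L1 x i ω.1 ω.2 _ i hfacts q hq
  -- fiberwise sum
  have hsum : (Finset.univ.filter P).card
      = ∑ v ∈ (Finset.univ : Finset V), ((Finset.univ.filter P).filter (fun ω => F ω = v)).card :=
    Finset.card_eq_sum_card_fiberwise (fun ω _ => Finset.mem_univ (F ω))
  -- real bound per certificate
  have hreal : ∀ v : V, ((Finset.univ.filter (QB (m := m) x i (List.ofFn v.2))).card : ℝ)
      ≤ (m : ℝ) ^ (2 * u) / (m : ℝ) ^ (2 * (v.1 : ℕ) + 1) := by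
    intro v
    rw [le_div_iff₀ (by positivity)]
    have := count_QB (m := m) hx i (List.ofFn v.2)
    rw [List.length_ofFn] at this
    calc ((Finset.univ.filter (QB (m := m) x i (List.ofFn v.2))).card : ℝ)
          * (m : ℝ) ^ (2 * (v.1 : ℕ) + 1)
        = (((Finset.univ.filter (QB (m := m) x i (List.ofFn v.2))).card
            * m ^ (2 * (v.1 : ℕ) + 1) : ℕ) : ℝ) := by push_cast; ring
      _ ≤ ((m ^ (2 * u) : ℕ) : ℝ) := by exact_mod_cast this
      _ = (m : ℝ) ^ (2 * u) := by push_cast; ring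
  -- put it together
  have htotal : ((Finset.univ.filter P).card : ℝ)
      ≤ ∑ v ∈ (Finset.univ : Finset V), (m : ℝ) ^ (2 * u) / (m : ℝ) ^ (2 * (v.1 : ℕ) + 1) := by
    rw [hsum]
    push_cast
    apply Finset.sum_le_sum
    intro v _
    exact le_trans (by exact_mod_cast fiber_bound v) (hreal v)
  -- evaluate the sigma sum
  have hsigma : ∑ v ∈ (Finset.univ : Finset V),
        (m : ℝ) ^ (2 * u) / (m : ℝ) ^ (2 * (v.1 : ℕ) + 1)
      = ∑ s ∈ Finset.range (n + 1),
          ((n : ℝ) ^ 2) ^ s * ((m : ℝ) ^ (2 * u) / (m : ℝ) ^ (2 * s + 1)) := by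
    rw [← Finset.univ_sigma_univ, Finset.sum_sigma]
    rw [← Fin.sum_univ_eq_sum_range
      (fun s => ((n : ℝ) ^ 2) ^ s * ((m : ℝ) ^ (2 * u) / (m : ℝ) ^ (2 * s + 1)))]
    apply Finset.sum_congr rfl
    intro s _
    rw [show (∑ b : Fin (s : ℕ) → Fin n × Fin n,
          (m : ℝ) ^ (2 * u) / (m : ℝ) ^ (2 * ((⟨s, b⟩ : V).1 : ℕ) + 1))
        = ∑ _b : Fin (s : ℕ) → Fin n × Fin n,
          (m : ℝ) ^ (2 * u) / (m : ℝ) ^ (2 * (s : ℕ) + 1) from rfl]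
    rw [Finset.sum_const, Finset.card_univ, Fintype.card_fun, Fintype.card_prod,
      Fintype.card_fin, Fintype.card_fin, nsmul_eq_mul]
    push_cast
    ring
  -- geometric bound
  have hq : ((n : ℝ) / m) ^ 2 < 1 := by
    have h1 : (n : ℝ) / m ≤ 1 / (1 + ε) := by
      rw [div_le_div_iff₀ hmpos (by linarith)]
      nlinarith
    have h2 : (n : ℝ) / m ≥ 0 := by positivity
    have h3 : (n : ℝ) / m < 1 :=
      lt_of_le_of_lt h1 (by rw [div_lt_one (by linarith)]; linarith)
    exact pow_lt_one₀ h2 h3 (by norm_num)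
  have hq0 : 0 ≤ ((n : ℝ) / m) ^ 2 := by positivity
  have hgeom : ∑ s ∈ Finset.range (n + 1), (((n : ℝ) / m) ^ 2) ^ s
      ≤ (1 + ε) / ε := by
    set q : ℝ := ((n : ℝ) / m) ^ 2 with hqdef
    have h1q : (0 : ℝ) < 1 - q := by linarith
    have h1 : ∑ s ∈ Finset.range (n + 1), q ^ s ≤ 1 / (1 - q) := by
      have key : (1 - q) * ∑ s ∈ Finset.range (n + 1), q ^ s = 1 - q ^ (n + 1) :=
        mul_neg_geom_sum q (n + 1)
      rw [le_div_iff₀ h1q]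
      nlinarith [pow_nonneg hq0 (n + 1)]
    have h2 : 1 / (1 - q) ≤ (1 + ε) / ε := by
      have h1' : (n : ℝ) / m ≤ 1 / (1 + ε) := by
        rw [div_le_div_iff₀ hmpos (by linarith)]
        nlinarith
      have h2' : (0:ℝ) ≤ (n : ℝ) / m := by positivity
      have h3' : q ≤ 1 / (1 + ε) := by
        rw [hqdef]
        nlinarith
      rw [le_div_iff₀ (by linarith : (0:ℝ) < 1 + ε)] at h3'
      rw [div_le_div_iff₀ h1q hε]
      nlinarith
    linarith
  -- finish
  rw [hnum, hden]
  push_cast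
  have hdenpos : (0 : ℝ) < (m : ℝ) ^ (2 * u) := by positivity
  rw [div_le_iff₀ hdenpos]
  calc ((Finset.univ.filter P).card : ℝ)
      ≤ ∑ s ∈ Finset.range (n + 1),
          ((n : ℝ) ^ 2) ^ s * ((m : ℝ) ^ (2 * u) / (m : ℝ) ^ (2 * s + 1)) := by
        rw [← hsigma]; exact htotal
    _ = (m : ℝ) ^ (2 * u) * ((1 / m) * ∑ s ∈ Finset.range (n + 1), (((n : ℝ) / m) ^ 2) ^ s) := by
        rw [Finset.mul_sum, Finset.mul_sum]
        apply Finset.sum_congr rfl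
        intro s _
        rw [pow_add, pow_mul, pow_mul]
        field_simp
        rw [← mul_pow, mul_div_cancel₀ _ (by positivity)]
    _ ≤ (m : ℝ) ^ (2 * u) * ((1 / m) * ((1 + ε) / ε)) := by
        apply mul_le_mul_of_nonneg_left _ (le_of_lt hdenpos)
        apply mul_le_mul_of_nonneg_left hgeom (by positivity)
    _ = (1 + ε) / (ε * m) * (m : ℝ) ^ (2 * u) := by field_simp
end

section
/- If m ≥ (1+ε)n with ε > 0, then with probability at least 1 − 2(1+ε)²/(ε³ n) over independent uniform h₀,h₁ : U → Fin m, there exists a legal placement τ : Fin n → Bool such that for all distinct i,j with τ(i)=τ(j)=σ, h_σ(x_i) ≠ h_σ(x_j). -/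
open Finset

namespace CuckooProof

/-! ### Alternating sign function -/

def sgn (s : Bool) (j : ℕ) : Bool := if j % 2 = 0 then s else !s

lemma sgn_zero (s : Bool) : sgn s 0 = s := by simp [sgn]

lemma sgn_succ (s : Bool) (j : ℕ) : sgn s (j + 1) = !(sgn s j) := by
  unfold sgn
  rcases Nat.even_or_odd j with h | h
  · rw [Nat.even_iff] at h
    have : (j + 1) % 2 = 1 := by omega
    simp [h, this]
  · rw [Nat.odd_iff] at h
    have : (j + 1) % 2 = 0 := by omega
    simp [h, this]

lemma sgn_parity {s : Bool} {a b : ℕ} : sgn s a = sgn s b ↔ a % 2 = b % 2 := by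
  unfold sgn
  have ha := Nat.mod_two_eq_zero_or_one a
  have hb := Nat.mod_two_eq_zero_or_one b
  rcases ha with ha | ha <;> rcases hb with hb | hb <;>
    simp [ha, hb] <;> cases s <;> simp <;> omega

lemma sgn_not (s : Bool) (j : ℕ) : sgn (!s) j = !(sgn s j) := by
  unfold sgn; split_ifs <;> simp

/-! ### Counting configurations satisfying a triangular constraint system -/

lemma card_constrained {V : Type*} [Fintype V] [DecidableEq V] (m K : ℕ)
    (c : Fin K → V) (hc : Function.Injective c)
    (g : Fin K → (V → Fin m) → Fin m)
    (hg : ∀ (t : Fin K) (H₁ H₂ : V → Fin m),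
        (∀ v, (∀ s : Fin K, t ≤ s → v ≠ c s) → H₁ v = H₂ v) → g t H₁ = g t H₂) :
    (univ.filter fun H : V → Fin m => ∀ t, H (c t) = g t H).card
      ≤ m ^ (Fintype.card V - K) := by
  classical
  have key : ∀ H₁ H₂ : V → Fin m, (∀ t, H₁ (c t) = g t H₁) → (∀ t, H₂ (c t) = g t H₂) →
      (∀ v, v ∉ Set.range c → H₁ v = H₂ v) → H₁ = H₂ := by
    intro H₁ H₂ h₁ h₂ hout
    have hct : ∀ N (t : Fin K), (t : ℕ) < N → H₁ (c t) = H₂ (c t) := by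
      intro N
      induction N with
      | zero => intro t ht; omega
      | succ N ih =>
        intro t ht
        rcases lt_or_ge (t : ℕ) N with h | h
        · exact ih t h
        · have hgt : g t H₁ = g t H₂ := by
            apply hg
            intro v hv
            by_cases hvr : v ∈ Set.range c
            · obtain ⟨s, rfl⟩ := hvr
              have hs : (s : ℕ) < N := by
                by_contra hcon
                exact hv s (by rw [Fin.le_def]; omega) rfl
              exact ih s hs
            · exact hout v hvr
          rw [h₁ t, h₂ t, hgt]
    funext v
    by_cases hvr : v ∈ Set.range c
    · obtain ⟨s, rfl⟩ := hvr
      exact hct K s s.isLt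
    · exact hout v hvr
  -- injection into functions on the complement of the range
  have hinj : Set.InjOn (fun (H : V → Fin m) (v : {v // v ∉ Set.range c}) => H v.1)
      ((univ.filter fun H : V → Fin m => ∀ t, H (c t) = g t H) : Finset (V → Fin m)) := by
    intro H₁ hH₁ H₂ hH₂ heq
    simp only [coe_filter, Set.mem_setOf_eq, mem_univ, true_and] at hH₁ hH₂
    exact key H₁ H₂ hH₁ hH₂ (fun v hv => congrFun heq ⟨v, hv⟩)
  have hcard := Finset.card_le_card_of_injOn
      (f := fun (H : V → Fin m) (v : {v // v ∉ Set.range c}) => H v.1)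
      (fun _ _ => mem_univ _) hinj
  refine hcard.trans ?_
  rw [card_univ, Fintype.card_fun]
  have h1 : Fintype.card {v // v ∈ Set.range c} = K := by
    rw [Fintype.card_congr (Equiv.ofInjective c hc).symm, Fintype.card_fin]
  have h2 : Fintype.card {v // v ∉ Set.range c} = Fintype.card V - K := by
    rw [Fintype.card_subtype_compl, h1]
  rw [h2, Fintype.card_fin]

/-! ### Geometric-type sum bounds -/

lemma geomA {t : ℝ} (N : ℕ) : (1 - t) * ∑ k ∈ range N, t ^ k = 1 - t ^ N := by
  induction N with
  | zero => simp
  | succ N ih => rw [sum_range_succ, mul_add, ih, pow_succ]; ring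

lemma geomB {t : ℝ} (N : ℕ) :
    (1 - t) * ∑ k ∈ range N, ((k : ℝ) + 1) * t ^ k
      = (∑ k ∈ range N, t ^ k) - N * t ^ N := by
  induction N with
  | zero => simp
  | succ N ih =>
    rw [sum_range_succ, mul_add, ih, sum_range_succ]
    push_cast
    ring

lemma geomC {t : ℝ} (N : ℕ) :
    (1 - t) * ∑ k ∈ range N, ((k : ℝ) + 1) * ((k : ℝ) + 2) / 2 * t ^ k
      = (∑ k ∈ range N, ((k : ℝ) + 1) * t ^ k) - N * (N + 1) / 2 * t ^ N := by
  induction N with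
  | zero => simp
  | succ N ih =>
    rw [sum_range_succ, mul_add, ih, sum_range_succ]
    push_cast
    ring

lemma geom3_bound {t : ℝ} (h0 : 0 ≤ t) (h1 : t < 1) (N : ℕ) :
    ∑ k ∈ range N, ((k : ℝ) + 1) * ((k : ℝ) + 2) / 2 * t ^ k ≤ 1 / (1 - t) ^ 3 := by
  have hpos : (0 : ℝ) < 1 - t := by linarith
  have hA : ∑ k ∈ range N, t ^ k ≤ 1 / (1 - t) := by
    rw [le_div_iff₀ hpos, mul_comm, geomA]
    have : (0 : ℝ) ≤ t ^ N := pow_nonneg h0 N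
    linarith
  have hB : ∑ k ∈ range N, ((k : ℝ) + 1) * t ^ k ≤ 1 / (1 - t) ^ 2 := by
    rw [le_div_iff₀ (by positivity), mul_comm]
    have h := geomB (t := t) N
    have hterm : (0 : ℝ) ≤ (N : ℝ) * t ^ N := by positivity
    have : (1 - t) * ∑ k ∈ range N, ((k : ℝ) + 1) * t ^ k ≤ 1 / (1 - t) := by
      rw [h]; linarith
    calc (1 - t) ^ 2 * ∑ k ∈ range N, ((k : ℝ) + 1) * t ^ k
        = (1 - t) * ((1 - t) * ∑ k ∈ range N, ((k : ℝ) + 1) * t ^ k) := by ring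
      _ ≤ (1 - t) * (1 / (1 - t)) := by
          apply mul_le_mul_of_nonneg_left this (le_of_lt hpos)
      _ = 1 := by field_simp
  rw [le_div_iff₀ (by positivity), mul_comm]
  have h := geomC (t := t) N
  have hterm : (0 : ℝ) ≤ (N : ℝ) * ((N : ℝ) + 1) / 2 * t ^ N := by positivity
  have hstep : (1 - t) * ∑ k ∈ range N, ((k : ℝ) + 1) * ((k : ℝ) + 2) / 2 * t ^ k
      ≤ 1 / (1 - t) ^ 2 := by rw [h]; linarith
  calc (1 - t) ^ 3 * ∑ k ∈ range N, ((k : ℝ) + 1) * ((k : ℝ) + 2) / 2 * t ^ k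
      = (1 - t) ^ 2 * ((1 - t) * ∑ k ∈ range N, ((k : ℝ) + 1) * ((k : ℝ) + 2) / 2 * t ^ k) := by
        ring
    _ ≤ (1 - t) ^ 2 * (1 / (1 - t) ^ 2) := by
        apply mul_le_mul_of_nonneg_left hstep (by positivity)
    _ = 1 := by field_simp

section Trails

variable {U : Type*} [Fintype U] {n m : ℕ} (x : Fin n → U) (H : Bool × U → Fin m)

/-- hash value of item `i` on side `s` -/
def sl (s : Bool) (i : Fin n) : Fin m := H (s, x i)

/-- A trail: `k` distinct items from `S`, consecutively sharing hash slots,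
with alternating sides starting from side `s`. -/
def IsTrail (S : Finset (Fin n)) (s : Bool) (e : ℕ → Fin n) (k : ℕ) : Prop :=
  0 < k ∧ (∀ j, j < k → e j ∈ S) ∧
  (∀ j₁ j₂, j₁ < k → j₂ < k → e j₁ = e j₂ → j₁ = j₂) ∧
  (∀ j, j + 1 < k → sl x H (sgn s (j+1)) (e (j+1)) = sl x H (sgn s (j+1)) (e j))

/-- value (in `Fin m`) of the `j`-th vertex of the trail -/
def vv (s : Bool) (e : ℕ → Fin n) (j : ℕ) : Fin m :=
  if j = 0 then sl x H s (e 0) else sl x H (sgn s j) (e (j-1))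

lemma vv_zero (s : Bool) (e : ℕ → Fin n) : vv x H s e 0 = sl x H s (e 0) := by simp [vv]

lemma vv_pos (s : Bool) (e : ℕ → Fin n) {j : ℕ} (hj : 0 < j) :
    vv x H s e j = sl x H (sgn s j) (e (j-1)) := by
  simp [vv, Nat.pos_iff_ne_zero.mp hj]

lemma vv_self {S s e k} (ht : IsTrail x H S s e k) {j : ℕ} (hj : j < k) :
    vv x H s e j = sl x H (sgn s j) (e j) := by
  rcases Nat.eq_zero_or_pos j with rfl | hj0
  · rw [vv_zero, sgn_zero]
  · rw [vv_pos x H s e hj0]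
    obtain ⟨j', rfl⟩ : ∃ j', j = j' + 1 := ⟨j - 1, by omega⟩
    simpa using (ht.2.2.2 j' hj).symm

lemma extend_end {S s e k} (ht : IsTrail x H S s e k) (i : Fin n) (hiS : i ∈ S)
    (hiu : ∀ j, j < k → e j ≠ i) (hinc : sl x H (sgn s k) i = vv x H s e k) :
    IsTrail x H S s (fun j => if j < k then e j else i) (k+1) := by
  obtain ⟨hk, hmem, hinj, hch⟩ := ht
  refine ⟨by omega, ?_, ?_, ?_⟩
  · intro j hj
    by_cases h : j < k
    · simpa [h] using hmem j h
    · simp [h, hiS]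
  · intro j₁ j₂ h₁ h₂ he
    by_cases c₁ : j₁ < k <;> by_cases c₂ : j₂ < k <;> simp [c₁, c₂] at he
    · exact hinj _ _ c₁ c₂ he
    · exact absurd he (hiu _ c₁)
    · exact absurd he.symm (hiu _ c₂)
    · omega
  · intro j hj
    by_cases h : j + 1 < k
    · have h' : j < k := by omega
      simp only [h, h', if_pos]
      exact hch j h
    · have hjk : j + 1 = k := by omega
      have h' : j < k := by omega
      simp only [h, h', if_pos, if_neg (lt_irrefl k), hjk]
      rw [hinc, vv_pos x H s e (by omega : 0 < k)]
      congr 2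
      omega

lemma extend_front {S s e k} (ht : IsTrail x H S s e k) (i : Fin n) (hiS : i ∈ S)
    (hiu : ∀ j, j < k → e j ≠ i) (hinc : sl x H s i = vv x H s e 0) :
    IsTrail x H S (!s) (fun j => if j = 0 then i else e (j-1)) (k+1) := by
  obtain ⟨hk, hmem, hinj, hch⟩ := ht
  refine ⟨by omega, ?_, ?_, ?_⟩
  · intro j hj
    by_cases h : j = 0 <;> simp [h, hiS]
    exact hmem _ (by omega)
  · intro j₁ j₂ h₁ h₂ he
    by_cases c₁ : j₁ = 0 <;> by_cases c₂ : j₂ = 0 <;> simp [c₁, c₂] at he ⊢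
    · exact absurd he.symm (hiu _ (by omega))
    · exact absurd he (hiu _ (by omega))
    · have := hinj _ _ (by omega) (by omega) he; omega
  · intro j hj
    rcases Nat.eq_zero_or_pos j with rfl | hj0
    · simp only [if_pos rfl, if_neg (by omega : (0:ℕ)+1 ≠ 0)]
      have : sgn (!s) 1 = s := by rw [sgn_succ, sgn_zero, Bool.not_not]
      rw [this]
      simpa [vv_zero] using hinc.symm
    · have h1 : j + 1 ≠ 0 := by omega
      have h2 : j ≠ 0 := by omega
      simp only [if_neg h1, if_neg h2]
      have hsg : sgn (!s) (j+1) = sgn s j := by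
        rw [sgn_not, sgn_succ, Bool.not_not]
      rw [hsg]
      have : j - 1 + 1 = j := by omega
      have hch' := hch (j-1) (by omega)
      rw [this] at hch'
      simpa using hch'

lemma trail_card_le {S s e k} (ht : IsTrail x H S s e k) : k ≤ S.card := by
  have := Finset.card_le_card_of_injOn (f := e) (s := range k) (t := S)
    (fun j hj => ht.2.1 j (mem_range.mp hj))
    (fun a ha b hb hab => ht.2.2.1 a b (mem_range.mp ha) (mem_range.mp hb) hab)
  simpa using this

lemma exists_maximal_trail (S : Finset (Fin n)) (hS : S.Nonempty) :
    ∃ s e k, IsTrail x H S s e k ∧ ∀ s' e' k', IsTrail x H S s' e' k' → k' ≤ k := by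
  classical
  obtain ⟨i, hi⟩ := hS
  set P : ℕ → Prop := fun k => ∃ s e, IsTrail x H S s e k with hP
  have hP1 : P 1 := by
    refine ⟨true, fun _ => i, by omega, fun j hj => hi, ?_, by omega⟩
    intro j₁ j₂ h₁ h₂ _; omega
  have hbound : ∀ k, P k → k ≤ S.card := by
    rintro k ⟨s, e, ht⟩; exact trail_card_le x H ht
  have hScard : 1 ≤ S.card := Finset.card_pos.mpr ⟨i, hi⟩
  have hmax := Nat.findGreatest_spec (P := P) hScard hP1
  obtain ⟨s, e, ht⟩ := hmax
  refine ⟨s, e, _, ht, ?_⟩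
  intro s' e' k' ht'
  by_contra hcon
  push_neg at hcon
  exact Nat.findGreatest_is_greatest hcon (hbound k' ⟨s', e', ht'⟩) ⟨s', e', ht'⟩

/-! ### Rotation of closed trails -/

def IsClosed (S : Finset (Fin n)) (s : Bool) (e : ℕ → Fin n) (k : ℕ) : Prop :=
  IsTrail x H S s e k ∧ k % 2 = 0 ∧ vv x H s e k = vv x H s e 0

def rot1 (e : ℕ → Fin n) (k : ℕ) : ℕ → Fin n := fun j => if j + 1 < k then e (j+1) else e 0

lemma sgn_even_eq {s : Bool} {j : ℕ} (h : j % 2 = 0) : sgn s j = s := by simp [sgn, h]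

lemma rot1_spec {S s e k} (hc : IsClosed x H S s e k) :
    IsClosed x H S (!s) (rot1 e k) k ∧
    (∀ j, j ≤ k → vv x H (!s) (rot1 e k) j = vv x H s e ((j+1) % k)) := by
  obtain ⟨⟨hk, hmem, hinj, hch⟩, keven, hclv⟩ := hc
  have hk2 : 2 ≤ k := by omega
  have hsk : sgn s k = s := sgn_even_eq keven
  have hcl : sl x H s (e (k-1)) = sl x H s (e 0) := by
    have h1 := vv_pos x H s e (by omega : 0 < k)
    rw [h1, hsk, vv_zero] at hclv
    exact hclv
  have hform : ∀ j, j ≤ k → vv x H (!s) (rot1 e k) j = vv x H s e ((j+1) % k) := by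
    intro j hj
    rcases Nat.eq_zero_or_pos j with rfl | hj0
    · have h1k : (0+1) % k = 1 := Nat.mod_eq_of_lt (by omega)
      rw [h1k, vv_zero, vv_pos x H s e one_pos]
      have hrot : rot1 e k 0 = e 1 := by
        unfold rot1; rw [if_pos (show 0 + 1 < k by omega)]
      rw [hrot]
      have hsg1 : sgn s 1 = !s := by rw [sgn_succ, sgn_zero]
      rw [hsg1]
      have h0 := hch 0 (by omega)
      rw [hsg1] at h0
      simpa using h0
    · rw [vv_pos x H (!s) (rot1 e k) hj0]
      have hsg : sgn (!s) j = sgn s (j+1) := by rw [sgn_not, sgn_succ]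
      rcases lt_or_eq_of_le hj with hjk | rfl
      · -- j < k
        have hr : rot1 e k (j-1) = e j := by
          have hjj : j - 1 + 1 = j := by omega
          unfold rot1; rw [hjj, if_pos hjk]
        rw [hr, hsg]
        rcases lt_or_eq_of_le (by omega : j + 1 ≤ k) with hj1 | hj1
        · rw [Nat.mod_eq_of_lt hj1, vv_pos x H s e (by omega : 0 < j+1)]
          simp
        · -- j + 1 = k
          rw [hj1, Nat.mod_self, vv_zero, hsk, show j = k - 1 by omega]
          exact hcl
      · -- j = k (k has been substituted by j)
        have hr : rot1 e j (j-1) = e 0 := by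
          unfold rot1; rw [if_neg (show ¬ (j-1+1 < j) by omega)]
        rw [hr, hsg]
        have hmod : (j+1) % j = 1 := by
          rw [Nat.add_mod_left]; exact Nat.mod_eq_of_lt (by omega)
        rw [hmod, vv_pos x H s e one_pos]
        have hp : sgn s (j+1) = sgn s 1 := sgn_parity.mpr (by omega)
        rw [hp]
        simp
  refine ⟨⟨⟨by omega, ?_, ?_, ?_⟩, keven, ?_⟩, hform⟩
  · intro j hj
    unfold rot1
    split_ifs with h
    · exact hmem _ h
    · exact hmem 0 (by omega)
  · intro j₁ j₂ h₁ h₂ he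
    unfold rot1 at he
    split_ifs at he with c₁ c₂ c₂
    · have := hinj _ _ c₁ c₂ he; omega
    · have := hinj _ _ c₁ (by omega) he; omega
    · have := hinj _ _ (by omega) c₂ he; omega
    · omega
  · intro j hj
    have hsg : sgn (!s) (j+1) = sgn s (j+2) := by
      rw [sgn_not, show j+2 = (j+1)+1 from rfl, sgn_succ s (j+1)]
    have hr0 : rot1 e k j = e (j+1) := by simp [rot1, hj]
    show sl x H _ (rot1 e k (j+1)) = sl x H _ (rot1 e k j)
    rw [hr0, hsg]
    by_cases h2 : j + 2 < k
    · have hr1 : rot1 e k (j+1) = e (j+2) := by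
        unfold rot1; rw [if_pos (show j+1+1 < k by omega)]
      rw [hr1]
      exact hch (j+1) h2
    · have hj2 : j + 2 = k := by omega
      have hr1 : rot1 e k (j+1) = e 0 := by
        unfold rot1; rw [if_neg (show ¬ (j+1+1 < k) by omega)]
      rw [hr1, hj2, hsk]
      have : j + 1 = k - 1 := by omega
      rw [this]
      exact hcl.symm
  · -- closedness of rotated trail
    have h1 : (k+1) % k = 1 := by
      rw [Nat.add_mod_left]; exact Nat.mod_eq_of_lt (by omega)
    have h2 : (0+1) % k = 1 := Nat.mod_eq_of_lt (by omega)
    rw [hform k (le_refl k), hform 0 (by omega), h1, h2]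

lemma rot1_used {e : ℕ → Fin n} {k : ℕ} (hk : 0 < k) (i : Fin n) :
    (∃ j, j < k ∧ rot1 e k j = i) ↔ (∃ j, j < k ∧ e j = i) := by
  constructor
  · rintro ⟨j, hj, rfl⟩
    unfold rot1
    split_ifs with h
    · exact ⟨j+1, h, rfl⟩
    · exact ⟨0, hk, rfl⟩
  · rintro ⟨j, hj, rfl⟩
    rcases Nat.eq_zero_or_pos j with rfl | hj0
    · refine ⟨k-1, by omega, ?_⟩
      unfold rot1; rw [if_neg (show ¬ (k-1+1 < k) by omega)]
    · refine ⟨j-1, by omega, ?_⟩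
      unfold rot1; rw [if_pos (show j-1+1 < k by omega), show j-1+1 = j by omega]

def rotN (s : Bool) (e : ℕ → Fin n) (k : ℕ) : ℕ → Bool × (ℕ → Fin n)
  | 0 => (s, e)
  | t+1 => (!(rotN s e k t).1, rot1 (rotN s e k t).2 k)

lemma rotN_spec {S s e k} (hc : IsClosed x H S s e k) (t : ℕ) :
    IsClosed x H S (rotN s e k t).1 (rotN s e k t).2 k ∧
    (∀ j, j ≤ k → vv x H (rotN s e k t).1 (rotN s e k t).2 j = vv x H s e ((j+t) % k)) ∧
    (∀ i, (∃ j, j < k ∧ (rotN s e k t).2 j = i) ↔ (∃ j, j < k ∧ e j = i)) ∧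
    (rotN s e k t).1 = sgn s t := by
  have hk : 0 < k := hc.1.1
  induction t with
  | zero =>
    refine ⟨hc, ?_, fun i => Iff.rfl, (sgn_zero s).symm⟩
    intro j hj
    show vv x H s e j = vv x H s e ((j + 0) % k)
    rcases lt_or_eq_of_le hj with h | rfl
    · have hmod : (j + 0) % k = j := by rw [Nat.add_zero]; exact Nat.mod_eq_of_lt h
      rw [hmod]
    · have hmod : (j + 0) % j = 0 := by rw [Nat.add_zero]; exact Nat.mod_self j
      rw [hmod]
      exact hc.2.2
  | succ t ih =>
    obtain ⟨ihc, ihv, ihu, ihs⟩ := ih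
    obtain ⟨hc', hform⟩ := rot1_spec x H ihc
    refine ⟨hc', ?_, ?_, ?_⟩
    · intro j hj
      show vv x H (!(rotN s e k t).1) (rot1 (rotN s e k t).2 k) j = _
      rw [hform j hj]
      rw [ihv ((j+1) % k) (le_of_lt (Nat.mod_lt _ hk))]
      congr 1
      rw [Nat.mod_add_mod]
      congr 1
      omega
    · intro i
      exact Iff.trans (rot1_used hk i) (ihu i)
    · have hstep : (rotN s e k (t+1)).1 = !(rotN s e k t).1 := rfl
      rw [hstep, ihs, ← sgn_succ]
end Trails

/-! ### Witness events -/

def Qset (k : ℕ) : Finset ℕ := (Icc 2 (k-1)).filter (fun q => q % 2 = 0)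
def Pset (k : ℕ) : Finset ℕ := (range k).filter (fun p => p % 2 = k % 2)

lemma Qset_card (k : ℕ) : (Qset k).card ≤ (k-1)/2 := by
  have h := Finset.card_le_card_of_injOn (f := fun q => q / 2) (s := Qset k)
    (t := Icc 1 ((k-1)/2)) ?_ ?_
  · simpa [Nat.card_Icc] using h
  · intro q hq
    simp only [Qset, coe_filter, mem_filter, Set.mem_setOf_eq, mem_Icc] at hq
    simp only [coe_Icc, Set.mem_Icc, mem_Icc]
    omega
  · intro q₁ h₁ q₂ h₂ hqq
    simp only [Qset, coe_filter, Set.mem_setOf_eq, mem_Icc] at h₁ h₂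
    have hqq' : q₁ / 2 = q₂ / 2 := hqq
    omega

lemma Pset_card (k : ℕ) : (Pset k).card ≤ k/2 := by
  have h := Finset.card_le_card_of_injOn (f := fun p => (k - p) / 2) (s := Pset k)
    (t := Icc 1 (k/2)) ?_ ?_
  · simpa [Nat.card_Icc] using h
  · intro p hp
    simp only [Pset, coe_filter, mem_filter, Set.mem_setOf_eq, mem_range] at hp
    simp only [coe_Icc, Set.mem_Icc, mem_Icc]
    omega
  · intro p₁ h₁ p₂ h₂ hpp
    simp only [Pset, coe_filter, Set.mem_setOf_eq, mem_range] at h₁ h₂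
    have hpp' : (k - p₁) / 2 = (k - p₂) / 2 := hpp
    omega

section Witness
variable {U : Type*} [Fintype U] {n m : ℕ} (x : Fin n → U)

def ext0 (i₀ : Fin n) {k : ℕ} (e : Fin k → Fin n) : ℕ → Fin n :=
  fun j => if h : j < k then e ⟨j, h⟩ else i₀

open Classical in
noncomputable def WitE (i₀ : Fin n) (k : ℕ) : Finset (ℕ → Fin n) :=
  ((univ : Finset (Fin k → Fin n)).filter Function.Injective).image (ext0 i₀)

noncomputable def Wit (i₀ : Fin n) (k : ℕ) : Finset (Bool × (ℕ → Fin n) × ℕ × ℕ) :=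
  (univ : Finset Bool) ×ˢ (WitE i₀ k ×ˢ (Qset k ×ˢ Pset k))

lemma WitE_card (i₀ : Fin n) (k : ℕ) : (WitE i₀ k).card ≤ n ^ k := by
  classical
  refine (Finset.card_image_le).trans ?_
  refine (Finset.card_filter_le _ _).trans ?_
  rw [card_univ]
  rw [Fintype.card_fun]
  simp

lemma Wit_card (i₀ : Fin n) (k : ℕ) :
    (Wit i₀ k).card = 2 * ((WitE i₀ k).card * ((Qset k).card * (Pset k).card)) := by
  simp [Wit, Finset.card_product]

open Classical in
noncomputable def Ev (k : ℕ) (w : Bool × (ℕ → Fin n) × ℕ × ℕ) : Finset (Bool × U → Fin m) :=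
  univ.filter (fun H =>
    (∀ j, j + 2 ≤ k → H (sgn w.1 (j+1), x (w.2.1 (j+1))) = H (sgn w.1 (j+1), x (w.2.1 j))) ∧
    H (w.1, x (w.2.1 0)) = H (w.1, x (w.2.1 (w.2.2.1 - 1))) ∧
    H (sgn w.1 k, x (w.2.1 (k-1))) =
      (if w.2.2.2 = 0 then H (w.1, x (w.2.1 0)) else H (sgn w.1 k, x (w.2.1 (w.2.2.2 - 1)))))

lemma Ev_card_le (hx : Function.Injective x) {k : ℕ} (hk3 : 3 ≤ k)
    {s : Bool} {e : ℕ → Fin n} {q p : ℕ}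
    (hei : ∀ j₁ j₂, j₁ < k → j₂ < k → e j₁ = e j₂ → j₁ = j₂)
    (hq2 : 2 ≤ q) (hqk : q ≤ k - 1) (hpk : p < k) :
    (Ev x k (s, e, q, p) : Finset (Bool × U → Fin m)).card
      ≤ m ^ (2 * Fintype.card U - (k+1)) := by
  classical
  have hxe : ∀ a b, a < k → b < k → x (e a) = x (e b) → a = b :=
    fun a b ha hb h => hei a b ha hb (hx h)
  -- sign facts
  have hkseq : sgn s k = !(sgn s (k-1)) := by
    rw [← sgn_succ s (k-1), show k - 1 + 1 = k by omega]
  set c : Fin (k+1) → Bool × U := fun t =>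
    if (t : ℕ) < k - 1 then (sgn s ((t:ℕ)+1), x (e ((t:ℕ)+1)))
    else if (t : ℕ) = k - 1 then (s, x (e 0))
    else (sgn s k, x (e (k-1))) with hcdef
  set g : Fin (k+1) → ((Bool × U) → Fin m) → Fin m := fun t H =>
    if (t : ℕ) < k - 1 then H (sgn s ((t:ℕ)+1), x (e (t:ℕ)))
    else if (t : ℕ) = k - 1 then H (s, x (e (q-1)))
    else (if p = 0 then H (s, x (e 0)) else H (sgn s k, x (e (p-1)))) with hgdef
  have hcinj : Function.Injective c := by
    intro a b hab
    have ha := a.isLt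
    have hb := b.isLt
    apply Fin.ext
    simp only [hcdef] at hab
    split_ifs at hab with h1 h2 h3 h4 h5 h6 h7 h8 h9 <;>
      rw [Prod.mk.injEq] at hab
    · have := hxe _ _ (by omega) (by omega) hab.2; omega
    · have := hxe _ _ (by omega) (by omega) hab.2; omega
    · -- chain vs end : a+1 = k-1 and side clash
      have hidx := hxe _ _ (by omega) (by omega) hab.2
      have := sgn_parity.mp hab.1
      omega
    · have := hxe _ _ (by omega) (by omega) hab.2; omega
    · omega
    · have := hxe _ _ (by omega) (by omega) hab.2; omega
    · have hidx := hxe _ _ (by omega) (by omega) hab.2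
      have := sgn_parity.mp hab.1
      omega
    · have := hxe _ _ (by omega) (by omega) hab.2; omega
    · omega
  have hgd : ∀ (t : Fin (k+1)) (H₁ H₂ : (Bool × U) → Fin m),
      (∀ v, (∀ s' : Fin (k+1), t ≤ s' → v ≠ c s') → H₁ v = H₂ v) → g t H₁ = g t H₂ := by
    intro t H₁ H₂ hyp
    have ht := t.isLt
    simp only [hgdef]
    split_ifs with h1 h2 hp0
    · -- chain
      refine hyp _ ?_
      intro s' hs' hre
      have hs'' : (t : ℕ) ≤ (s' : ℕ) := hs'
      simp only [hcdef] at hre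
      split_ifs at hre with d1 d2 <;> rw [Prod.mk.injEq] at hre
      · have := hxe _ _ (by omega) (by omega) hre.2; omega
      · have hidx := hxe _ _ (by omega) (by omega) hre.2
        have hside : sgn s ((t:ℕ)+1) = sgn s 0 := by rw [sgn_zero]; exact hre.1
        have := sgn_parity.mp hside
        omega
      · have := hxe _ _ (by omega) (by omega) hre.2; omega
    · -- start
      refine hyp _ ?_
      intro s' hs' hre
      have hs'' : (t : ℕ) ≤ (s' : ℕ) := hs'
      simp only [hcdef] at hre
      split_ifs at hre with d1 d2 <;> rw [Prod.mk.injEq] at hre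
      · omega
      · have := hxe _ _ (by omega) (by omega) hre.2; omega
      · have := hxe _ _ (by omega) (by omega) hre.2; omega
    · -- end, p = 0
      refine hyp _ ?_
      intro s' hs' hre
      have hs'' : (t : ℕ) ≤ (s' : ℕ) := hs'
      have htk : (t : ℕ) = k := by omega
      simp only [hcdef] at hre
      split_ifs at hre with d1 d2 <;> rw [Prod.mk.injEq] at hre
      · omega
      · omega
      · have := hxe _ _ (by omega) (by omega) hre.2; omega
    · -- end, p ≥ 1
      refine hyp _ ?_
      intro s' hs' hre
      have hs'' : (t : ℕ) ≤ (s' : ℕ) := hs'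
      have htk : (t : ℕ) = k := by omega
      simp only [hcdef] at hre
      split_ifs at hre with d1 d2 <;> rw [Prod.mk.injEq] at hre
      · omega
      · omega
      · have := hxe _ _ (by omega) (by omega) hre.2; omega
  have hsub : Ev x k (s, e, q, p) ⊆
      (univ.filter fun H : (Bool × U) → Fin m => ∀ t, H (c t) = g t H) := by
    intro H hH
    simp only [Ev, mem_filter, mem_univ, true_and] at hH
    obtain ⟨C1, C2, C3⟩ := hH
    simp only [mem_filter, mem_univ, true_and]
    intro t
    have ht := t.isLt
    simp only [hcdef, hgdef]
    split_ifs with h1 h2 hp0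
    · exact C1 (t : ℕ) (by omega)
    · exact C2
    · simpa [hp0] using C3
    · simpa [hp0] using C3
  refine (Finset.card_le_card hsub).trans ?_
  have := card_constrained m (k+1) c hcinj g hgd
  refine this.trans ?_
  have hcard : Fintype.card (Bool × U) = 2 * Fintype.card U := by
    simp [Fintype.card_prod]
  rw [hcard]

end Witness

/-! ### Completeness: a bad configuration admits a witness -/

lemma bool_not_of_ne {a b : Bool} (h : a ≠ b) : (!a) = b := by
  cases a <;> cases b <;> simp_all

section Completeness
variable {U : Type*} [Fintype U] {n m : ℕ} (x : Fin n → U) (H : Bool × U → Fin m)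

def Good (H : Bool × U → Fin m) : Prop :=
  ∃ τ : Fin n → Bool, ∀ i j : Fin n, i ≠ j → τ i = τ j → H (τ i, x i) ≠ H (τ j, x j)

instance (H : Bool × U → Fin m) : Decidable (Good x H) := by
  unfold Good
  infer_instance

def slotsF (i : Fin n) : Finset (Bool × Fin m) :=
  {(false, sl x H false i), (true, sl x H true i)}

lemma mem_slotsF {w : Bool × Fin m} {i : Fin n} :
    w ∈ slotsF x H i ↔ w.2 = sl x H w.1 i := by
  rcases w with ⟨σ, v⟩
  cases σ <;> simp [slotsF]

lemma good_of_hall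
    (hall : ∀ S : Finset (Fin n), S.card ≤ (S.biUnion (slotsF x H)).card) :
    Good x H := by
  classical
  obtain ⟨f, hfinj, hf⟩ :=
    (Finset.all_card_le_biUnion_card_iff_existsInjective' (slotsF x H)).mp hall
  refine ⟨fun i => (f i).1, ?_⟩
  intro i j hij hτ heq
  dsimp only at hτ heq
  apply hij
  apply hfinj
  have hi := (mem_slotsF x H).mp (hf i)
  have hj := (mem_slotsF x H).mp (hf j)
  refine Prod.ext hτ ?_
  rw [hi, hj]
  exact heq

lemma exists_min_violator (hbad : ¬ Good x H) :
    ∃ S : Finset (Fin n), (S.biUnion (slotsF x H)).card < S.card ∧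
      ∀ T : Finset (Fin n), (T.biUnion (slotsF x H)).card < T.card → S.card ≤ T.card := by
  classical
  have hex : ∃ S : Finset (Fin n), (S.biUnion (slotsF x H)).card < S.card := by
    by_contra hcon
    push_neg at hcon
    exact hbad (good_of_hall x H (fun S => hcon S))
  obtain ⟨S₁, hS₁⟩ := hex
  obtain ⟨S₀, hS₀mem, hS₀min⟩ := Finset.exists_min_image
    (univ.filter (fun S : Finset (Fin n) => (S.biUnion (slotsF x H)).card < S.card))
    Finset.card ⟨S₁, by simp [hS₁]⟩
  refine ⟨S₀, by simpa using (mem_filter.mp hS₀mem).2, ?_⟩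
  intro T hT
  exact hS₀min T (by simp [hT])

lemma min_degree {S : Finset (Fin n)}
    (hviol : (S.biUnion (slotsF x H)).card < S.card)
    (hmin : ∀ T : Finset (Fin n), (T.biUnion (slotsF x H)).card < T.card → S.card ≤ T.card)
    (σ : Bool) (v : Fin m) (i : Fin n) (hiS : i ∈ S) (hiv : sl x H σ i = v) :
    ∃ i', i' ∈ S ∧ i' ≠ i ∧ sl x H σ i' = v := by
  classical
  by_contra hcon
  push_neg at hcon
  set T := S.erase i with hTdef
  have hv_mem : (σ, v) ∈ S.biUnion (slotsF x H) :=
    mem_biUnion.mpr ⟨i, hiS, (mem_slotsF x H).mpr (by simpa using hiv.symm)⟩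
  have hsub : T.biUnion (slotsF x H) ⊆ (S.biUnion (slotsF x H)).erase (σ, v) := by
    intro w hw
    obtain ⟨i', hi'T, hw'⟩ := mem_biUnion.mp hw
    rw [mem_erase]
    constructor
    · intro hwv
      have hmem := (mem_slotsF x H).mp hw'
      rw [hwv] at hmem
      exact hcon i' (mem_of_mem_erase hi'T) (ne_of_mem_erase hi'T) hmem.symm
    · exact mem_biUnion.mpr ⟨i', mem_of_mem_erase hi'T, hw'⟩
  have h1 : (T.biUnion (slotsF x H)).card ≤ (S.biUnion (slotsF x H)).card - 1 := by
    refine (Finset.card_le_card hsub).trans ?_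
    rw [Finset.card_erase_of_mem hv_mem]
  have h2 : T.card = S.card - 1 := Finset.card_erase_of_mem hiS
  have h3 : 0 < S.card := by omega
  have h4 : 1 ≤ (S.biUnion (slotsF x H)).card := Finset.card_pos.mpr ⟨_, hv_mem⟩
  have hTviol : (T.biUnion (slotsF x H)).card < T.card := by omega
  have := hmin T hTviol
  omega

lemma connected {S : Finset (Fin n)}
    (hviol : (S.biUnion (slotsF x H)).card < S.card)
    (hmin : ∀ T : Finset (Fin n), (T.biUnion (slotsF x H)).card < T.card → S.card ≤ T.card)
    (A : Finset (Fin n)) (hA : A ⊆ S) (hne : A.Nonempty) (hproper : A ≠ S) :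
    ∃ (τ : Bool) (i i' : Fin n), i ∈ A ∧ i' ∈ S ∧ i' ∉ A ∧ sl x H τ i' = sl x H τ i := by
  classical
  by_contra hcon
  push_neg at hcon
  have hBne : (S \ A).Nonempty := by
    rw [Finset.sdiff_nonempty]
    intro hSA
    exact hproper (Finset.Subset.antisymm hA hSA)
  have hdisj : Disjoint (A.biUnion (slotsF x H)) ((S \ A).biUnion (slotsF x H)) := by
    rw [Finset.disjoint_left]
    intro w hwA hwB
    obtain ⟨i, hiA, hwi⟩ := mem_biUnion.mp hwA
    obtain ⟨i', hi'B, hwi'⟩ := mem_biUnion.mp hwB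
    have h1 := (mem_slotsF x H).mp hwi
    have h2 := (mem_slotsF x H).mp hwi'
    have hi'S : i' ∈ S := (Finset.mem_sdiff.mp hi'B).1
    have hi'nA : i' ∉ A := (Finset.mem_sdiff.mp hi'B).2
    exact hcon w.1 i i' hiA hi'S hi'nA (h2.symm.trans h1)
  have hsubA : A.biUnion (slotsF x H) ⊆ S.biUnion (slotsF x H) :=
    Finset.biUnion_subset_biUnion_of_subset_left _ hA
  have hsubB : (S \ A).biUnion (slotsF x H) ⊆ S.biUnion (slotsF x H) :=
    Finset.biUnion_subset_biUnion_of_subset_left _ (Finset.sdiff_subset)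
  have hApos : A.card < S.card := Finset.card_lt_card (lt_of_le_of_ne hA hproper)
  have hBpos : (S \ A).card < S.card := by
    have := Finset.card_sdiff_add_card_eq_card hA
    have hAc : 0 < A.card := Finset.card_pos.mpr hne
    omega
  have hAcard : A.card ≤ (A.biUnion (slotsF x H)).card := by
    by_contra hcontra
    have := hmin A (by omega)
    omega
  have hBcard : (S \ A).card ≤ ((S \ A).biUnion (slotsF x H)).card := by
    by_contra hcontra
    have := hmin (S \ A) (by omega)
    omega
  have hun : (A.biUnion (slotsF x H)).card + ((S \ A).biUnion (slotsF x H)).card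
      ≤ (S.biUnion (slotsF x H)).card := by
    rw [← Finset.card_union_of_disjoint hdisj]
    exact Finset.card_le_card (Finset.union_subset hsubA hsubB)
  have hsum := Finset.card_sdiff_add_card_eq_card hA
  omega

lemma witness_of_trail (hx : Function.Injective x) (i₀ : Fin n) {S : Finset (Fin n)}
    {s : Bool} {e : ℕ → Fin n} {k : ℕ} (ht : IsTrail x H S s e k) (hkn : k ≤ n)
    {q p : ℕ} (hq2 : 2 ≤ q) (hqk : q ≤ k - 1) (hqe : q % 2 = 0)
    (hpk : p < k) (hpe : p % 2 = k % 2)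
    (hstart : vv x H s e q = vv x H s e 0) (hend : vv x H s e p = vv x H s e k) :
    ∃ k' ∈ Icc 3 n, ∃ w ∈ Wit i₀ k', H ∈ Ev x k' w := by
  classical
  have hk3 : 3 ≤ k := by omega
  set e' : ℕ → Fin n := ext0 i₀ (fun t : Fin k => e t) with he'def
  have he'eq : ∀ j, j < k → e' j = e j := by
    intro j hj
    simp [he'def, ext0, hj]
  refine ⟨k, mem_Icc.mpr ⟨hk3, hkn⟩, (s, e', q, p), ?_, ?_⟩
  · simp only [Wit, Finset.mem_product, mem_univ, true_and]
    refine ⟨?_, ?_, ?_⟩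
    · simp only [WitE, mem_image]
      refine ⟨fun t : Fin k => e t, ?_, rfl⟩
      simp only [mem_filter, mem_univ, true_and]
      intro t₁ t₂ htt
      exact Fin.ext (ht.2.2.1 _ _ t₁.isLt t₂.isLt htt)
    · simp only [Qset, mem_filter, mem_Icc]
      omega
    · simp only [Pset, mem_filter, mem_range]
      omega
  · simp only [Ev, mem_filter, mem_univ, true_and]
    refine ⟨?_, ?_, ?_⟩
    · intro j hj
      show H (sgn s (j+1), x (e' (j+1))) = H (sgn s (j+1), x (e' j))
      rw [he'eq (j+1) (by omega), he'eq j (by omega)]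
      exact ht.2.2.2 j (by omega)
    · show H (s, x (e' 0)) = H (s, x (e' (q-1)))
      rw [he'eq 0 (by omega), he'eq (q-1) (by omega)]
      have h1 : vv x H s e q = sl x H (sgn s q) (e (q-1)) := vv_pos x H s e (by omega)
      have h2 : sgn s q = s := sgn_even_eq hqe
      rw [h1, h2, vv_zero] at hstart
      exact hstart.symm
    · show H (sgn s k, x (e' (k-1))) =
        (if p = 0 then H (s, x (e' 0)) else H (sgn s k, x (e' (p-1))))
      rw [he'eq (k-1) (by omega)]
      by_cases hp0 : p = 0
      · rw [if_pos hp0, he'eq 0 (by omega)]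
        subst hp0
        rw [vv_zero, vv_pos x H s e (by omega : 0 < k)] at hend
        have hsk : sgn s k = s := sgn_even_eq (by omega)
        rw [hsk] at hend
        rw [hsk]
        exact hend.symm
      · rw [if_neg hp0, he'eq (p-1) (by omega)]
        rw [vv_pos x H s e (by omega : 0 < p), vv_pos x H s e (by omega : 0 < k)] at hend
        have hsp : sgn s p = sgn s k := sgn_parity.mpr hpe
        rw [hsp] at hend
        exact hend.symm

lemma bad_witness (hx : Function.Injective x) (i₀ : Fin n) (hbad : ¬ Good x H) :
    ∃ k ∈ Icc 3 n, ∃ w ∈ Wit i₀ k, H ∈ Ev x k w := by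
  classical
  obtain ⟨S, hviol, hmin⟩ := exists_min_violator x H hbad
  have hSpos : 0 < S.card := by omega
  have hSne : S.Nonempty := Finset.card_pos.mp hSpos
  have hSn : S.card ≤ n := by
    have := Finset.card_le_univ S
    simpa using this
  obtain ⟨s, e, k, ht, hmax⟩ := exists_maximal_trail x H S hSne
  have hk1 : 1 ≤ k := ht.1
  have hkS : k ≤ S.card := trail_card_le x H ht
  have hnoe : ∀ i, i ∈ S → (∀ j, j < k → e j ≠ i) →
      sl x H (sgn s k) i ≠ vv x H s e k := by
    intro i hiS hiu hinc
    have ht' := extend_end x H ht i hiS hiu hinc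
    have := hmax _ _ _ ht'
    omega
  have hnof : ∀ i, i ∈ S → (∀ j, j < k → e j ≠ i) →
      sl x H s i ≠ vv x H s e 0 := by
    intro i hiS hiu hinc
    have ht' := extend_front x H ht i hiS hiu hinc
    have := hmax _ _ _ ht'
    omega
  have hrev_end : ∃ pp, pp < k ∧ pp % 2 = k % 2 ∧ vv x H s e pp = vv x H s e k := by
    have hinc : sl x H (sgn s k) (e (k-1)) = vv x H s e k :=
      (vv_pos x H s e (by omega)).symm
    obtain ⟨i', hi'S, hi'ne, hi'v⟩ := min_degree x H hviol hmin (sgn s k) (vv x H s e k)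
      (e (k-1)) (ht.2.1 (k-1) (by omega)) hinc
    have hused : ∃ j, j < k ∧ e j = i' := by
      by_contra hcon
      push_neg at hcon
      exact hnoe i' hi'S (fun j hj => hcon j hj) hi'v
    obtain ⟨j, hj, rfl⟩ := hused
    have hjne : j ≠ k - 1 := fun hcon => hi'ne (by rw [hcon])
    by_cases hsg : sgn s j = sgn s k
    · exact ⟨j, hj, sgn_parity.mp hsg, by rw [vv_self x H ht hj, hsg, hi'v]⟩
    · have hsg' : sgn s (j+1) = sgn s k := by
        rw [sgn_succ]
        exact bool_not_of_ne hsg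
      refine ⟨j+1, by omega, sgn_parity.mp hsg', ?_⟩
      rw [vv_pos x H s e (by omega : 0 < j+1)]
      simp only [Nat.add_sub_cancel]
      rw [hsg', hi'v]
  have hrev_start : ∃ qq, 1 ≤ qq ∧ qq ≤ k ∧ qq % 2 = 0 ∧
      vv x H s e qq = vv x H s e 0 := by
    have hinc : sl x H s (e 0) = vv x H s e 0 := (vv_zero x H s e).symm
    obtain ⟨i', hi'S, hi'ne, hi'v⟩ := min_degree x H hviol hmin s (vv x H s e 0)
      (e 0) (ht.2.1 0 (by omega)) hinc
    have hused : ∃ j, j < k ∧ e j = i' := by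
      by_contra hcon
      push_neg at hcon
      exact hnof i' hi'S (fun j hj => hcon j hj) hi'v
    obtain ⟨j, hj, rfl⟩ := hused
    have hjne : j ≠ 0 := fun hcon => hi'ne (by rw [hcon])
    by_cases hsg : sgn s j = s
    · have hpar : j % 2 = 0 := by
        have hj0 : sgn s j = sgn s 0 := by rw [hsg, sgn_zero]
        have := sgn_parity.mp hj0
        omega
      refine ⟨j, by omega, by omega, hpar, ?_⟩
      rw [vv_self x H ht hj, hsg, hi'v, vv_zero]
    · have hsg' : sgn s (j+1) = s := by
        rw [sgn_succ]
        exact bool_not_of_ne hsg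
      have hpar : (j+1) % 2 = 0 := by
        have hj0 : sgn s (j+1) = sgn s 0 := by rw [hsg', sgn_zero]
        have := sgn_parity.mp hj0
        omega
      refine ⟨j+1, by omega, by omega, hpar, ?_⟩
      rw [vv_pos x H s e (by omega : 0 < j+1)]
      simp only [Nat.add_sub_cancel]
      rw [hsg', hi'v, vv_zero]
  obtain ⟨qq, hqq1, hqqk, hqqe, hqqv⟩ := hrev_start
  by_cases hqlt : qq < k
  · obtain ⟨pp, hppk, hppe, hppv⟩ := hrev_end
    exact witness_of_trail x H hx i₀ ht (le_trans hkS hSn)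
      (by omega) (by omega) hqqe hppk hppe hqqv hppv
  · have hqk : qq = k := by omega
    have keven : k % 2 = 0 := by omega
    rw [hqk] at hqqv
    have hclosed : IsClosed x H S s e k := ⟨ht, keven, hqqv⟩
    by_cases hdup : ∃ a b, a < b ∧ b < k ∧ sgn s a = sgn s b ∧
        vv x H s e a = vv x H s e b
    · obtain ⟨a, b, hab, hbk, hsgab, hvab⟩ := hdup
      obtain ⟨hc', hvv', hused', hside'⟩ := rotN_spec x H hclosed a
      have hv0 : vv x H (rotN s e k a).1 (rotN s e k a).2 0 = vv x H s e a := by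
        rw [hvv' 0 (by omega)]
        congr 1
        rw [Nat.zero_add]
        exact Nat.mod_eq_of_lt (by omega)
      have hvba : vv x H (rotN s e k a).1 (rotN s e k a).2 (b-a) = vv x H s e b := by
        rw [hvv' (b-a) (by omega)]
        congr 1
        rw [show b - a + a = b by omega]
        exact Nat.mod_eq_of_lt hbk
      have hstart : vv x H (rotN s e k a).1 (rotN s e k a).2 (b-a)
          = vv x H (rotN s e k a).1 (rotN s e k a).2 0 := by
        rw [hvba, hv0, hvab]
      have hend : vv x H (rotN s e k a).1 (rotN s e k a).2 0
          = vv x H (rotN s e k a).1 (rotN s e k a).2 k := hc'.2.2.symm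
      have hpar := sgn_parity.mp hsgab
      exact witness_of_trail x H hx i₀ hc'.1 (le_trans hkS hSn)
        (by omega) (by omega) (by omega) (by omega) (by omega) hstart hend
    · exfalso
      have hinj2 : ∀ t₁ t₂, t₁ < k → t₂ < k →
          (sgn s t₁, vv x H s e t₁) = (sgn s t₂, vv x H s e t₂) → t₁ = t₂ := by
        intro t₁ t₂ h₁ h₂ hpair
        by_contra hne
        rw [Prod.mk.injEq] at hpair
        rcases Nat.lt_or_ge t₁ t₂ with hlt | hge
        · exact hdup ⟨t₁, t₂, hlt, h₂, hpair.1, hpair.2⟩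
        · exact hdup ⟨t₂, t₁, by omega, h₁, hpair.1.symm, hpair.2.symm⟩
      have hkV : k ≤ (S.biUnion (slotsF x H)).card := by
        have hmemV : ∀ t ∈ range k, (sgn s t, vv x H s e t) ∈ S.biUnion (slotsF x H) := by
          intro t htk
          rw [mem_range] at htk
          refine mem_biUnion.mpr ⟨e t, ht.2.1 t htk, ?_⟩
          rw [mem_slotsF]
          exact vv_self x H ht htk
        have := Finset.card_le_card_of_injOn
          (f := fun t => (sgn s t, vv x H s e t)) hmemV
          (fun t₁ h₁ t₂ h₂ hp => hinj2 t₁ t₂ (mem_range.mp h₁) (mem_range.mp h₂) hp)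
        simpa using this
      have hkcard : k < S.card := by omega
      set Us := (range k).image e with hUsdef
      have hUscard : Us.card = k := by
        rw [hUsdef, Finset.card_image_of_injOn]
        · simp
        · intro a ha b hb hab
          exact ht.2.2.1 a b (mem_range.mp ha) (mem_range.mp hb) hab
      have hUsS : Us ⊆ S := by
        intro i hi
        obtain ⟨j, hj, rfl⟩ := mem_image.mp hi
        exact ht.2.1 j (mem_range.mp hj)
      have hUsne : Us.Nonempty := ⟨e 0, mem_image.mpr ⟨0, mem_range.mpr (by omega), rfl⟩⟩
      have hUsne' : Us ≠ S := by
        intro hcon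
        rw [hcon] at hUscard
        omega
      obtain ⟨τ, i, i', hiA, hi'S, hi'nA, hslots⟩ :=
        connected x H hviol hmin Us hUsS hUsne hUsne'
      obtain ⟨a, ha, rfl⟩ := mem_image.mp hiA
      rw [mem_range] at ha
      have hvt : ∃ t, t < k ∧ τ = sgn s t ∧ sl x H τ i' = vv x H s e t := by
        by_cases hτ : τ = sgn s a
        · exact ⟨a, ha, hτ, by rw [hslots, vv_self x H ht ha, ← hτ]⟩
        · have hτ' : τ = sgn s (a+1) := by
            rw [sgn_succ]
            exact (bool_not_of_ne (fun hcon => hτ hcon.symm)).symm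
          by_cases hak : a + 1 < k
          · refine ⟨a+1, hak, hτ', ?_⟩
            rw [hslots, hτ']
            rw [vv_pos x H s e (by omega : 0 < a+1)]
            simp only [Nat.add_sub_cancel]
          · have hak' : a + 1 = k := by omega
            refine ⟨0, by omega, ?_, ?_⟩
            · rw [hτ', hak', sgn_zero]
              exact sgn_even_eq keven
            · rw [hslots, hτ', hak', show a = k - 1 by omega]
              have h1 : vv x H s e k = sl x H (sgn s k) (e (k-1)) :=
                vv_pos x H s e (by omega)
              rw [← h1]
              exact hqqv
      obtain ⟨t, htk2, hτt, hslv⟩ := hvt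
      obtain ⟨hc2, hvv2, hused2, hside2⟩ := rotN_spec x H hclosed t
      have hvk : vv x H (rotN s e k t).1 (rotN s e k t).2 k = vv x H s e t := by
        rw [hvv2 k (le_refl k)]
        congr 1
        rw [Nat.add_mod_left]
        exact Nat.mod_eq_of_lt htk2
      have hiu' : ∀ j, j < k → (rotN s e k t).2 j ≠ i' := by
        intro j hj hcon
        obtain ⟨j', hj', hj'e⟩ := (hused2 i').mp ⟨j, hj, hcon⟩
        exact hi'nA (mem_image.mpr ⟨j', mem_range.mpr hj', hj'e⟩)
      have hinc' : sl x H (sgn (rotN s e k t).1 k) i'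
          = vv x H (rotN s e k t).1 (rotN s e k t).2 k := by
        rw [hvk, sgn_even_eq keven, hside2, ← hτt]
        exact hslv
      have hext := extend_end x H hc2.1 i' hi'S hiu' hinc'
      have := hmax _ _ _ hext
      omega
end Completeness

/-! ### Union bound and final assembly -/

lemma shifted_sum_bound {t : ℝ} (h0 : 0 ≤ t) (h1 : t < 1) (n : ℕ) :
    ∑ k ∈ Icc 3 n, (((k:ℝ)-1) * k / 2) * t ^ (k+1) ≤ t^3 / (1-t)^3 := by
  have h1mt : (0:ℝ) < 1 - t := by linarith
  have hrhs : (0:ℝ) ≤ t^3 / (1-t)^3 :=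
    div_nonneg (pow_nonneg h0 3) (pow_nonneg h1mt.le 3)
  have hsub : ∑ k ∈ Icc 3 n, (((k:ℝ)-1) * k / 2) * t^(k+1)
      ≤ ∑ k ∈ range (n+1), (((k:ℝ)-1) * k / 2) * t^(k+1) := by
    apply Finset.sum_le_sum_of_subset_of_nonneg
    · intro k hk
      rw [mem_Icc] at hk
      rw [mem_range]
      omega
    · intro k _ _
      rcases Nat.eq_zero_or_pos k with rfl | hkpos
      · simp
      · have hk1 : (1:ℝ) ≤ k := by exact_mod_cast hkpos
        apply mul_nonneg _ (pow_nonneg h0 _)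
        apply div_nonneg _ (by norm_num)
        apply mul_nonneg (by linarith) (by positivity)
  refine hsub.trans ?_
  rcases Nat.lt_or_ge n 2 with hn2 | hn2
  · have hzero : ∑ k ∈ range (n+1), (((k:ℝ)-1) * k / 2) * t^(k+1) = 0 := by
      interval_cases n <;> norm_num [Finset.sum_range_succ]
    rw [hzero]
    exact hrhs
  · obtain ⟨N, hN⟩ : ∃ N, n + 1 = N + 2 := ⟨n - 1, by omega⟩
    rw [hN, Finset.sum_range_succ' _ (N+1), Finset.sum_range_succ' _ N]
    have hz0 : (((0:ℕ):ℝ)-1) * ((0:ℕ):ℝ) / 2 * t^(0+1) = 0 := by norm_num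
    have hz1 : (((0+1:ℕ):ℝ)-1) * ((0+1:ℕ):ℝ) / 2 * t^((0+1)+1) = 0 := by norm_num
    rw [hz0, hz1, add_zero, add_zero]
    have hcongr : ∀ i ∈ range N, (((i+1+1:ℕ):ℝ)-1) * ((i+1+1:ℕ):ℝ) / 2 * t^((i+1+1)+1)
        = t^3 * (((i:ℝ)+1) * ((i:ℝ)+2) / 2 * t^i) := by
      intro i _
      push_cast
      ring
    rw [Finset.sum_congr rfl hcongr, ← Finset.mul_sum]
    calc t^3 * ∑ i ∈ range N, ((i:ℝ)+1) * ((i:ℝ)+2) / 2 * t^i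
        ≤ t^3 * (1/(1-t)^3) := by
          apply mul_le_mul_of_nonneg_left (geom3_bound h0 h1 N) (by positivity)
      _ = t^3 / (1-t)^3 := by ring

lemma ratio_bound {t ε : ℝ} (hε : 0 < ε) (ht0 : 0 ≤ t) (ht1 : t < 1)
    (htβ : t ≤ 1/(1+ε)) : t^3/(1-t)^3 ≤ 2*(1+ε)^2/ε^3 := by
  have h1mt : (0:ℝ) < 1 - t := by linarith
  have hce : (0:ℝ) < 1 + ε := by linarith
  have htm : t * (1+ε) ≤ 1 := by
    have h := mul_le_mul_of_nonneg_right htβ (le_of_lt hce)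
    rwa [one_div, inv_mul_cancel₀ (ne_of_gt hce)] at h
  have h1 : t/(1-t) ≤ 1/ε := by
    rw [div_le_div_iff₀ h1mt hε]
    nlinarith
  have h2 : (t/(1-t))^3 ≤ (1/ε)^3 := pow_le_pow_left₀ (by positivity) h1 3
  rw [div_pow, div_pow, one_pow] at h2
  refine h2.trans ?_
  rw [div_le_div_iff₀ (by positivity) (by positivity)]
  nlinarith [pow_pos hε 3, sq_nonneg ε, mul_pos hε hε]

section Union
variable {U : Type*} [Fintype U] [DecidableEq U] {n m : ℕ}

lemma bad_card_le (x : Fin n → U) (hx : Function.Injective x) (i₀ : Fin n) :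
    ((univ : Finset (Bool × U → Fin m)).filter (fun H => ¬ Good x H)).card
      ≤ ∑ k ∈ Icc 3 n, 2 * n ^ k * ((k-1)/2 * (k/2)) * m ^ (2 * Fintype.card U - (k+1)) := by
  classical
  have hsub : (univ.filter (fun H : Bool × U → Fin m => ¬ Good x H)) ⊆
      (Icc 3 n).biUnion (fun k => (Wit i₀ k).biUnion (fun w => Ev x k w)) := by
    intro H hH
    rw [mem_filter] at hH
    obtain ⟨k, hk, w, hw, hmem⟩ := bad_witness x H hx i₀ hH.2
    exact mem_biUnion.mpr ⟨k, hk, mem_biUnion.mpr ⟨w, hw, hmem⟩⟩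
  refine (Finset.card_le_card hsub).trans ?_
  refine (Finset.card_biUnion_le).trans ?_
  apply Finset.sum_le_sum
  intro k hk
  rw [mem_Icc] at hk
  refine (Finset.card_biUnion_le).trans ?_
  have hbound : ∀ w ∈ Wit i₀ k, (Ev x k w : Finset (Bool × U → Fin m)).card
      ≤ m ^ (2 * Fintype.card U - (k+1)) := by
    intro w hw
    rcases w with ⟨s, e, q, p⟩
    simp only [Wit, Finset.mem_product, mem_univ, true_and] at hw
    obtain ⟨hwE, hwq, hwp⟩ := hw
    have hei : ∀ j₁ j₂, j₁ < k → j₂ < k → e j₁ = e j₂ → j₁ = j₂ := by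
      simp only [WitE, mem_image] at hwE
      obtain ⟨e₀, he₀, rfl⟩ := hwE
      rw [mem_filter] at he₀
      intro j₁ j₂ h₁ h₂ hee
      simp only [ext0, dif_pos h₁, dif_pos h₂] at hee
      have := he₀.2 hee
      exact congrArg Fin.val this
    simp only [Qset, mem_filter, mem_Icc] at hwq
    simp only [Pset, mem_filter, mem_range] at hwp
    exact Ev_card_le x hx (by omega) hei hwq.1.1 hwq.1.2 hwp.1
  calc ∑ w ∈ Wit i₀ k, (Ev x k w).card
      ≤ ∑ _w ∈ Wit i₀ k, m ^ (2 * Fintype.card U - (k+1)) := Finset.sum_le_sum hbound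
    _ = (Wit i₀ k).card * m ^ (2 * Fintype.card U - (k+1)) := by
        rw [Finset.sum_const, smul_eq_mul]
    _ ≤ 2 * n ^ k * ((k-1)/2 * (k/2)) * m ^ (2 * Fintype.card U - (k+1)) := by
        apply Nat.mul_le_mul_right
        rw [Wit_card]
        have h1 := WitE_card i₀ k
        have h2 := Qset_card k
        have h3 := Pset_card k
        calc 2 * ((WitE i₀ k).card * ((Qset k).card * (Pset k).card))
            ≤ 2 * (n ^ k * ((k-1)/2 * (k/2))) := by
              apply Nat.mul_le_mul_left
              exact Nat.mul_le_mul h1 (Nat.mul_le_mul h2 h3)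
          _ = 2 * n ^ k * ((k-1)/2 * (k/2)) := by ring
end Union

/-! ### Real arithmetic bound -/

lemma real_bound (n m cU : ℕ) (hn : 1 ≤ n) (ε : ℝ) (hε : 0 < ε)
    (hm : (1+ε) * n ≤ m) (hcU : n ≤ cU) :
    ((∑ k ∈ Icc 3 n, 2 * n ^ k * ((k-1)/2 * (k/2)) * m ^ (2 * cU - (k+1)) : ℕ) : ℝ)
      ≤ 2 * (1+ε)^2 / (ε^3 * (n:ℝ)) * (m:ℝ) ^ (2 * cU) := by
  have hnR : (1:ℝ) ≤ n := by exact_mod_cast hn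
  have hmR : (n:ℝ) < m := by nlinarith
  have hmpos : (0:ℝ) < m := by linarith
  have hnpos : (0:ℝ) < n := by linarith
  set t : ℝ := n / m with htdef
  have ht0 : 0 < t := by positivity
  have hce : (0:ℝ) < 1 + ε := by linarith
  have htβ : t ≤ 1/(1+ε) := by
    rw [htdef, div_le_div_iff₀ hmpos hce]
    nlinarith
  have ht1 : t < 1 := by
    rw [htdef, div_lt_one hmpos]
    exact hmR
  push_cast
  have hterm : ∀ k ∈ Icc 3 n,
      2 * (n:ℝ) ^ k * ((((k-1)/2 : ℕ) : ℝ) * (((k/2 : ℕ)) : ℝ)) * (m:ℝ) ^ (2*cU - (k+1))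
        ≤ (((k:ℝ)-1) * k / 2) * t^(k+1) * ((m:ℝ)^(2*cU) / n) := by
    intro k hk
    rw [mem_Icc] at hk
    have hk3 : 3 ≤ k := hk.1
    have hkcU : k + 1 ≤ 2 * cU := by omega
    have hc1 : ((((k-1)/2 : ℕ)) : ℝ) ≤ ((k:ℝ)-1)/2 := by
      calc ((((k-1)/2 : ℕ)) : ℝ) ≤ ((k-1 : ℕ) : ℝ)/2 := by
            exact_mod_cast Nat.cast_div_le
        _ = ((k:ℝ)-1)/2 := by
            rw [Nat.cast_sub (by omega)]
            norm_num
    have hc2 : ((((k/2 : ℕ))) : ℝ) ≤ (k:ℝ)/2 := by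
      exact_mod_cast (Nat.cast_div_le : ((k/2 : ℕ) : ℝ) ≤ ((k:ℕ):ℝ)/((2:ℕ):ℝ))
    have hpow : (m:ℝ)^(2*cU-(k+1)) = (m:ℝ)^(2*cU) / (m:ℝ)^(k+1) := by
      rw [eq_div_iff (by positivity), ← pow_add]
      congr 1
      omega
    have step1 : 2 * (n:ℝ) ^ k * ((((k-1)/2 : ℕ) : ℝ) * (((k/2 : ℕ)) : ℝ))
          * (m:ℝ) ^ (2*cU - (k+1))
        ≤ 2 * (n:ℝ) ^ k * (((k:ℝ)-1)/2 * ((k:ℝ)/2)) * (m:ℝ) ^ (2*cU - (k+1)) := by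
      apply mul_le_mul_of_nonneg_right _ (by positivity)
      apply mul_le_mul_of_nonneg_left _ (by positivity)
      have hkR : (3:ℝ) ≤ (k:ℝ) := by exact_mod_cast hk3
      apply mul_le_mul hc1 hc2 (by positivity) (by linarith)
    refine step1.trans (le_of_eq ?_)
    rw [hpow, htdef]
    rw [div_pow]
    field_simp
    ring
  calc ∑ k ∈ Icc 3 n, 2 * (n:ℝ) ^ k * ((((k-1)/2 : ℕ) : ℝ) * (((k/2 : ℕ)) : ℝ))
        * (m:ℝ) ^ (2*cU - (k+1))
      ≤ ∑ k ∈ Icc 3 n, (((k:ℝ)-1) * k / 2) * t^(k+1) * ((m:ℝ)^(2*cU) / n) :=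
        Finset.sum_le_sum hterm
    _ = (∑ k ∈ Icc 3 n, (((k:ℝ)-1) * k / 2) * t^(k+1)) * ((m:ℝ)^(2*cU) / n) := by
        rw [← Finset.sum_mul]
    _ ≤ (t^3/(1-t)^3) * ((m:ℝ)^(2*cU) / n) := by
        apply mul_le_mul_of_nonneg_right (shifted_sum_bound ht0.le ht1 n) (by positivity)
    _ ≤ (2*(1+ε)^2/ε^3) * ((m:ℝ)^(2*cU) / n) := by
        apply mul_le_mul_of_nonneg_right (ratio_bound hε ht0.le ht1 htβ) (by positivity)
    _ = 2 * (1+ε)^2 / (ε^3 * (n:ℝ)) * (m:ℝ) ^ (2 * cU) := by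
        field_simp

/-! ### Transfer to the pair space -/

section Transfer
variable {U : Type*} [Fintype U] {n m : ℕ}

def φm : ((U → Fin m) × (U → Fin m)) ≃ (Bool × U → Fin m) where
  toFun p := fun q => bif q.1 then p.2 q.2 else p.1 q.2
  invFun H := (fun u => H (false, u), fun u => H (true, u))
  left_inv p := rfl
  right_inv H := by
    funext q
    rcases q with ⟨b, u⟩
    cases b <;> rfl

lemma good_transfer (x : Fin n → U) (p : (U → Fin m) × (U → Fin m)) :
    (∃ τ : Fin n → Bool, ∀ i j : Fin n, i ≠ j → τ i = τ j →
      (bif τ i then p.2 else p.1) (x i) ≠ (bif τ j then p.2 else p.1) (x j))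
    ↔ Good x (φm p) := by
  have key : ∀ (b : Bool) (y : U), φm p (b, y) = (bif b then p.2 else p.1) y := by
    intro b y
    cases b <;> rfl
  constructor
  · rintro ⟨τ, h⟩
    refine ⟨τ, fun i j hij hτ => ?_⟩
    rw [key, key]
    exact h i j hij hτ
  · rintro ⟨τ, h⟩
    refine ⟨τ, fun i j hij hτ => ?_⟩
    rw [← key, ← key]
    exact h i j hij hτ

end Transfer

/-! ### Main theorem -/

theorem stmt15' {U : Type*} [Fintype U] (n m : ℕ) (hn : 1 ≤ n) (ε : ℝ) (hε : 0 < ε)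
    (hm : (1 + ε) * n ≤ m)
    (x : Fin n → U) (hx : Function.Injective x) :
    1 - 2 * (1 + ε) ^ 2 / (ε ^ 3 * n) ≤
      (Nat.card {p : (U → Fin m) × (U → Fin m) //
          ∃ τ : Fin n → Bool, ∀ i j : Fin n, i ≠ j → τ i = τ j →
            (bif τ i then p.2 else p.1) (x i) ≠ (bif τ j then p.2 else p.1) (x j)} : ℝ) /
        Nat.card ((U → Fin m) × (U → Fin m)) := by
  classical
  have hnR : (1:ℝ) ≤ n := by exact_mod_cast hn
  have hmR : (0:ℝ) < m := by nlinarith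
  have hncU : n ≤ Fintype.card U := by
    have := Fintype.card_le_of_injective x hx
    simpa using this
  have htot : Nat.card ((U → Fin m) × (U → Fin m)) = m ^ (2 * Fintype.card U) := by
    rw [Nat.card_eq_fintype_card, Fintype.card_prod, Fintype.card_fun, Fintype.card_fin]
    rw [two_mul, pow_add]
  have hgood : Nat.card {p : (U → Fin m) × (U → Fin m) //
      ∃ τ : Fin n → Bool, ∀ i j : Fin n, i ≠ j → τ i = τ j →
        (bif τ i then p.2 else p.1) (x i) ≠ (bif τ j then p.2 else p.1) (x j)}
      = ((univ : Finset (Bool × U → Fin m)).filter (fun H => Good x H)).card := by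
    rw [Nat.card_congr (Equiv.subtypeEquiv φm (fun p => good_transfer x p))]
    rw [Nat.card_eq_fintype_card, Fintype.card_subtype]
  have hsplit := Finset.card_filter_add_card_filter_not
      (s := (univ : Finset (Bool × U → Fin m))) (p := fun H => Good x H)
  have huniv : (univ : Finset (Bool × U → Fin m)).card = m ^ (2 * Fintype.card U) := by
    rw [card_univ, Fintype.card_fun, Fintype.card_prod, Fintype.card_bool,
      Fintype.card_fin]
  have hbadN := bad_card_le (m := m) x hx ⟨0, hn⟩
  have hbadR := real_bound n m (Fintype.card U) hn ε hε hm hncU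
  have hbcR : ((((univ : Finset (Bool × U → Fin m)).filter (fun H => ¬ Good x H)).card : ℕ) : ℝ)
      ≤ 2*(1+ε)^2/(ε^3*(n:ℝ)) * (m:ℝ)^(2 * Fintype.card U) := by
    refine le_trans ?_ hbadR
    exact_mod_cast hbadN
  rw [htot, hgood]
  have hTpos : (0:ℝ) < ((m:ℝ)) ^ (2 * Fintype.card U) := by positivity
  have hsum : (((univ : Finset (Bool × U → Fin m)).filter (fun H => Good x H)).card : ℝ)
      + (((univ : Finset (Bool × U → Fin m)).filter (fun H => ¬ Good x H)).card : ℝ)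
      = (m:ℝ) ^ (2 * Fintype.card U) := by
    rw [← Nat.cast_add]
    rw [hsplit, huniv]
    push_cast
    rfl
  have hcast : ((m ^ (2 * Fintype.card U) : ℕ) : ℝ) = (m:ℝ) ^ (2 * Fintype.card U) := by
    push_cast
    rfl
  rw [hcast, le_div_iff₀ hTpos]
  nlinarith [hbcR, hsum, hTpos]

end CuckooProof

/-- Main theorem for cuckoo hashing: if `m ≥ (1+ε)n` with `ε > 0`, then with
probability at least `1 - 2(1+ε)²/(ε³ n)` over independent uniform hash functions
`h₀, h₁ : U → Fin m`, there exists a legal placement of all `n` items. -/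
theorem stmt15 {U : Type*} [Fintype U] (n m : ℕ) (hn : 1 ≤ n) (ε : ℝ) (hε : 0 < ε)
    (hm : (1 + ε) * n ≤ m)
    (x : Fin n → U) (hx : Function.Injective x) :
    1 - 2 * (1 + ε) ^ 2 / (ε ^ 3 * n) ≤
      (Nat.card {p : (U → Fin m) × (U → Fin m) //
          ∃ τ : Fin n → Bool, ∀ i j : Fin n, i ≠ j → τ i = τ j →
            (bif τ i then p.2 else p.1) (x i) ≠ (bif τ j then p.2 else p.1) (x j)} : ℝ) /
        Nat.card ((U → Fin m) × (U → Fin m)) := by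
  exact CuckooProof.stmt15' n m hn ε hε hm x hx
end

section
/- If every connected component of the cuckoo graph contains at most as many edges as vertices (equivalently, at most one cycle per component), then a legal placement exists: there is an orientation of the edges such that every vertex has in-degree at most 1. -/
/-- Two vertices of a multigraph (given by an endpoint map `ends : E → V × V`) are
connected if they are related by the reflexive-transitive closure of adjacency. -/
def MGConnected {V E : Type*} (ends : E → V × V) : V → V → Prop :=
  Relation.ReflTransGen (fun u v => ∃ e : E, ends e = (u, v) ∨ ends e = (v, u))

namespace CuckooAux

open Finset Relation
open scoped Classical

variable {V E : Type*} (ends : E → V × V)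

/-- One-step adjacency. -/
def mstep (u v : V) : Prop := ∃ e : E, ends e = (u, v) ∨ ends e = (v, u)

lemma MGConnected_eq : MGConnected ends = ReflTransGen (mstep ends) := rfl

/-- One-step adjacency using only edges from `A`. -/
def stepOn (A : Finset E) (u v : V) : Prop := ∃ e ∈ A, ends e = (u, v) ∨ ends e = (v, u)

lemma stepOn_symm (A : Finset E) : Symmetric (stepOn ends A) := by
  rintro u v ⟨e, he, h | h⟩
  · exact ⟨e, he, Or.inr h⟩
  · exact ⟨e, he, Or.inl h⟩

/-- Connectivity using only edges from `A`. -/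
def connOn (A : Finset E) : V → V → Prop := ReflTransGen (stepOn ends A)

lemma connOn_refl (A : Finset E) (v : V) : connOn ends A v v := ReflTransGen.refl

lemma connOn_symm (A : Finset E) : Symmetric (connOn ends A) :=
  fun x y h => (@ReflTransGen.stdSymm _ _ ⟨stepOn_symm ends A⟩).symm x y h

lemma connOn_trans {A : Finset E} {u v w : V} (h : connOn ends A u v)
    (h' : connOn ends A v w) : connOn ends A u w := ReflTransGen.trans h h'

lemma connOn_conn {A : Finset E} {u v : V} (h : connOn ends A u v) :
    ReflTransGen (mstep ends) u v :=
  ReflTransGen.mono (r := stepOn ends A) (p := mstep ends) (fun a b ⟨e, _, h⟩ => ⟨e, h⟩) u v h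

/-- Reachability from the root set `P` in exactly `n` steps. -/
def reachN (P : V → Prop) : ℕ → V → Prop
  | 0, u => P u
  | n + 1, u => ∃ w, reachN P n w ∧ mstep ends w u

lemma exists_reachN {P : V → Prop} {t u : V} (hP : P t)
    (h : ReflTransGen (mstep ends) t u) : ∃ n, reachN ends P n u := by
  induction h with
  | refl => exact ⟨0, hP⟩
  | tail _ hstep ih =>
      obtain ⟨n, hn⟩ := ih
      exact ⟨n + 1, _, hn, hstep⟩

/-- Key injection: from the non-root vertices reachable from the root set `P`
into the edges, sending each vertex to an edge incident to it (the last edge of a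
shortest path from `P`). -/
lemma exists_inj (P : V → Prop) :
    ∃ g : {u : V // (∃ t, P t ∧ ReflTransGen (mstep ends) t u) ∧ ¬ P u} → E,
      Function.Injective g ∧
      ∀ u, (ends (g u)).1 = (u : V) ∨ (ends (g u)).2 = (u : V) := by
  classical
  set d : V → ℕ := fun u => sInf {n | reachN ends P n u} with hd
  have key : ∀ u : {u : V // (∃ t, P t ∧ ReflTransGen (mstep ends) t u) ∧ ¬ P u},
      ∃ e : E, ∃ w : V, (ends e = (w, (u : V)) ∨ ends e = ((u : V), w)) ∧
        d w < d (u : V) := by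
    rintro ⟨u, ⟨t, hPt, ht⟩, hPu⟩
    have hne : {n | reachN ends P n u}.Nonempty := exists_reachN ends hPt ht
    have hmem : reachN ends P (d u) u := Nat.sInf_mem hne
    have h0 : d u ≠ 0 := by
      intro h
      rw [h] at hmem
      exact hPu hmem
    obtain ⟨m, hm⟩ := Nat.exists_eq_succ_of_ne_zero h0
    rw [hm] at hmem
    obtain ⟨w, hw, e, he⟩ := hmem
    refine ⟨e, w, he, ?_⟩
    calc d w ≤ m := Nat.sInf_le hw
      _ < m + 1 := Nat.lt_succ_self m
      _ = d u := hm.symm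
  choose g w hgw hdw using key
  refine ⟨g, ?_, ?_⟩
  · intro u₁ u₂ hg
    apply Subtype.ext
    have h1 := hgw u₁
    have h2 := hgw u₂
    have d1 := hdw u₁
    have d2 := hdw u₂
    rw [hg] at h1
    rcases h1 with h1 | h1 <;> rcases h2 with h2 | h2 <;>
      rw [h2] at h1 <;> simp only [Prod.mk.injEq] at h1
    · exact h1.2.symm
    · rw [← h1.1] at d1
      rw [h1.2] at d2
      omega
    · rw [h1.1] at d2
      rw [← h1.2] at d1
      omega
    · exact h1.1.symm
  · intro u
    rcases hgw u with h | h <;> rw [h]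
    · exact Or.inr rfl
    · exact Or.inl rfl

/-- Card version of the key injection. -/
lemma card_le_of_reach [Fintype V] [Fintype E] (P : V → Prop) (B : Finset E)
    (hB : ∀ (e : E) (u : V), ((ends e).1 = u ∨ (ends e).2 = u) →
      (∃ t, P t ∧ ReflTransGen (mstep ends) t u) → ¬ P u → e ∈ B) :
    (univ.filter fun u : V =>
        (∃ t, P t ∧ ReflTransGen (mstep ends) t u) ∧ ¬ P u).card ≤ B.card := by
  classical
  obtain ⟨g, hginj, hge⟩ := exists_inj ends P
  have himg : ∀ u, g u ∈ B := fun u => hB _ _ (hge u) u.2.1 u.2.2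
  have hcard :
      Fintype.card {u : V // (∃ t, P t ∧ ReflTransGen (mstep ends) t u) ∧ ¬ P u} ≤
        Fintype.card {e : E // e ∈ B} := by
    refine Fintype.card_le_of_injective (fun u => ⟨g u, himg u⟩) ?_
    intro a b h
    exact hginj (congrArg Subtype.val h)
  rw [Fintype.card_coe] at hcard
  rw [Fintype.card_subtype] at hcard
  exact hcard

/-- Per-component Hall inequality. -/
lemma comp_le [Fintype V] [Fintype E]
    (hcomp : ∀ v : V,
      Nat.card {e : E // MGConnected ends v (ends e).1} ≤
        Nat.card {u : V // MGConnected ends v u})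
    (A : Finset E) (v₀ : V) :
    (A.filter fun e => connOn ends A v₀ (ends e).1).card ≤
      (univ.filter fun u => connOn ends A v₀ u).card := by
  classical
  set T := univ.filter fun u => connOn ends A v₀ u with hT
  set S := A.filter fun e => connOn ends A v₀ (ends e).1 with hS
  set CV := univ.filter fun u => MGConnected ends v₀ u with hCV
  set CE := univ.filter fun e => MGConnected ends v₀ (ends e).1 with hCE
  have hTCV : T ⊆ CV := by
    intro u hu
    rw [hT, mem_filter] at hu
    rw [hCV, mem_filter]
    exact ⟨mem_univ u, connOn_conn ends hu.2⟩
  have hSCE : S ⊆ CE := by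
    intro e he
    rw [hS, mem_filter] at he
    rw [hCE, mem_filter]
    exact ⟨mem_univ e, connOn_conn ends he.2⟩
  have hEV : CE.card ≤ CV.card := by
    have h := hcomp v₀
    rwa [Nat.card_eq_fintype_card, Nat.card_eq_fintype_card, Fintype.card_subtype,
      Fintype.card_subtype] at h
  have hL :
      (univ.filter fun u : V =>
          (∃ t, connOn ends A v₀ t ∧ ReflTransGen (mstep ends) t u) ∧
            ¬ connOn ends A v₀ u).card ≤ (CE \ S).card := by
    apply card_le_of_reach
    rintro e u hend ⟨t, hPt, htu⟩ hnP
    have hu : MGConnected ends v₀ u :=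
      ReflTransGen.trans (connOn_conn ends hPt) htu
    rw [mem_sdiff]
    constructor
    · rw [hCE, mem_filter]
      refine ⟨mem_univ e, ?_⟩
      rcases hend with h | h
      · rw [h]; exact hu
      · refine ReflTransGen.tail hu ⟨e, Or.inr ?_⟩
        rw [← h]
    · intro heS
      rw [hS, mem_filter] at heS
      have h2 : connOn ends A v₀ (ends e).2 :=
        ReflTransGen.tail heS.2 ⟨e, heS.1, Or.inl rfl⟩
      rcases hend with h | h
      · exact hnP (h ▸ heS.2)
      · exact hnP (h ▸ h2)
  have hset :
      (univ.filter fun u : V =>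
          (∃ t, connOn ends A v₀ t ∧ ReflTransGen (mstep ends) t u) ∧
            ¬ connOn ends A v₀ u) = CV \ T := by
    ext u
    rw [mem_filter, mem_sdiff, hCV, hT, mem_filter, mem_filter]
    constructor
    · rintro ⟨_, ⟨t, hPt, htu⟩, hnP⟩
      refine ⟨⟨mem_univ u, ReflTransGen.trans (connOn_conn ends hPt) htu⟩, ?_⟩
      intro h
      exact hnP h.2
    · rintro ⟨⟨_, hu⟩, hnT⟩
      refine ⟨mem_univ u, ⟨v₀, connOn_refl ends A v₀, hu⟩, ?_⟩
      intro h
      exact hnT ⟨mem_univ u, h⟩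
  rw [hset] at hL
  have h2 : (CE \ S).card + S.card = CE.card := card_sdiff_add_card_eq_card hSCE
  have h3 : (CV \ T).card + T.card = CV.card := card_sdiff_add_card_eq_card hTCV
  omega

end CuckooAux

/-- If in a finite multigraph every connected component contains at most as many
edges as vertices, then there is an orientation assigning each edge to one of its
endpoints injectively (i.e. every vertex has in-degree at most 1). -/
theorem stmt18 {V E : Type*} [Fintype V] [Fintype E] (ends : E → V × V)
    (hcomp : ∀ v : V,
      Nat.card {e : E // MGConnected ends v (ends e).1} ≤
        Nat.card {u : V // MGConnected ends v u}) :
    ∃ f : E → V, (∀ e : E, f e = (ends e).1 ∨ f e = (ends e).2) ∧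
      Function.Injective f := by
  classical
  open Finset Relation CuckooAux in
  have hall : ∀ A : Finset E,
      A.card ≤ (A.biUnion fun e => ({(ends e).1, (ends e).2} : Finset V)).card := by
    intro A
    set N := A.biUnion fun e => ({(ends e).1, (ends e).2} : Finset V) with hN
    let s : Setoid V := ⟨connOn ends A,
      ⟨fun _ => connOn_refl ends A _, fun h => connOn_symm ends A h,
        fun h h' => connOn_trans ends h h'⟩⟩
    let κ : V → Quotient s := Quotient.mk s
    have hκ : ∀ x y : V, κ x = κ y ↔ connOn ends A x y := fun x y => Quotient.eq
    rw [Finset.card_eq_sum_card_fiberwise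
      (f := fun e => κ (ends e).1) (t := A.image fun e => κ (ends e).1)
      (fun e he => Finset.mem_image_of_mem _ he)]
    rw [Finset.card_eq_sum_card_fiberwise
      (f := κ) (t := N.image κ) (fun v hv => Finset.mem_image_of_mem _ hv)]
    have hsub : (A.image fun e => κ (ends e).1) ⊆ N.image κ := by
      intro b hb
      obtain ⟨e, he, rfl⟩ := Finset.mem_image.1 hb
      refine Finset.mem_image_of_mem _ ?_
      rw [hN, Finset.mem_biUnion]
      exact ⟨e, he, by simp⟩
    calc ∑ b ∈ A.image fun e => κ (ends e).1,
          (A.filter fun e => κ (ends e).1 = b).card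
        ≤ ∑ b ∈ A.image fun e => κ (ends e).1,
            (N.filter fun v => κ v = b).card := by
          apply Finset.sum_le_sum
          intro b hb
          obtain ⟨e₀, he₀, rfl⟩ := Finset.mem_image.1 hb
          set v₀ := (ends e₀).1 with hv₀
          have hfa : (A.filter fun e => κ (ends e).1 = κ v₀) =
              A.filter fun e => connOn ends A v₀ (ends e).1 := by
            apply Finset.filter_congr
            intro e _
            rw [hκ]
            exact ⟨fun h => connOn_symm ends A h, fun h => connOn_symm ends A h⟩
          have hTN : ∀ u : V, connOn ends A v₀ u → u ∈ N := by
            intro u hu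
            rcases ReflTransGen.cases_tail hu with h | ⟨c, _, e, heA, he⟩
            · rw [h, hN, Finset.mem_biUnion]
              exact ⟨e₀, he₀, by simp [hv₀]⟩
            · rw [hN, Finset.mem_biUnion]
              refine ⟨e, heA, ?_⟩
              rcases he with he | he <;> rw [he] <;> simp
          have hfn : (N.filter fun v => κ v = κ v₀) =
              Finset.univ.filter fun u => connOn ends A v₀ u := by
            ext u
            rw [Finset.mem_filter, Finset.mem_filter, hκ]
            constructor
            · rintro ⟨_, h⟩
              exact ⟨Finset.mem_univ u, connOn_symm ends A h⟩
            · rintro ⟨_, h⟩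
              exact ⟨hTN u h, connOn_symm ends A h⟩
          rw [hfa, hfn]
          exact comp_le ends hcomp A v₀
      _ ≤ ∑ b ∈ N.image κ, (N.filter fun v => κ v = b).card :=
          Finset.sum_le_sum_of_subset hsub
  obtain ⟨f, hinj, hmem⟩ :=
    (Finset.all_card_le_biUnion_card_iff_exists_injective
      (fun e => ({(ends e).1, (ends e).2} : Finset V))).1 hall
  refine ⟨f, fun e => ?_, hinj⟩
  have := hmem e
  simp only [Finset.mem_insert, Finset.mem_singleton] at this
  exact this
end

section
/- If a node v in the inference graph is bad — i.e., there exists j with both (false,j) and (true,j) reachable from v — then for any σ, no legal placement τ with (τ-consistent placement at v's item in v's table) exists; in particular a path from (σ,i) to (¬σ,i) implies that in every legal placement τ, τ(i) = ¬σ. -/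
lemma reach_force {U : Type*} {n m : ℕ} (x : Fin n → U) (h : Bool → U → Fin m)
    (τ : Fin n → Bool)
    (hleg : ∀ a b : Fin n, a ≠ b → τ a = τ b → h (τ a) (x a) ≠ h (τ b) (x b))
    {v w : Bool × Fin n} (hr : Reach x h v w) (hv : τ v.2 = v.1) : τ w.2 = w.1 := by
  induction hr with
  | refl => exact hv
  | tail _ hadj ih =>
    rename_i b c _
    obtain ⟨h1, h2, h3⟩ := hadj
    by_contra hc
    have : τ c.2 = b.1 := by
      rw [h1] at hc
      cases hb : τ c.2 <;> cases hb1 : b.1 <;> simp_all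
    exact hleg b.2 c.2 h2 (by rw [ih, this]) (by rw [ih, this]; exact h3)

/-- If a node `(σ, i)` is bad, then no legal placement puts item `i` in table `σ`;
in particular, a directed path from `(σ, i)` to `(¬σ, i)` forces `τ i = ¬σ` in every
legal placement `τ`. -/
theorem stmt19 {U : Type*} {n m : ℕ} (x : Fin n → U) (h : Bool → U → Fin m)
    (σ : Bool) (i : Fin n) :
    (BadNode x h (σ, i) →
      ∀ τ : Fin n → Bool,
        (∀ a b : Fin n, a ≠ b → τ a = τ b → h (τ a) (x a) ≠ h (τ b) (x b)) →
        τ i ≠ σ) ∧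
    (Reach x h (σ, i) (!σ, i) →
      ∀ τ : Fin n → Bool,
        (∀ a b : Fin n, a ≠ b → τ a = τ b → h (τ a) (x a) ≠ h (τ b) (x b)) →
        τ i = !σ) := by
  constructor
  · rintro ⟨j, hf, ht⟩ τ hleg hτ
    have h1 := reach_force x h τ hleg hf hτ
    have h2 := reach_force x h τ hleg ht hτ
    simp at h1 h2; rw [h1] at h2; exact Bool.false_ne_true h2
  · intro hr τ hleg
    by_contra hc
    have hτ : τ i = σ := by cases hσ : σ <;> cases hτ : τ i <;> simp_all
    have := reach_force x h τ hleg hr hτ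
    exact hc this
end
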